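/- arXiv:1709.08262 — 3 statements merged into one kernel-verified Lean document; each statement's English description precedes it below -/
import Mathlib

section
/- Let φ ∈ C_c^∞((0,1)) with 0 ≤ φ ≤ 1, let δ > 0, ε > 0, and let k be a positive integer. Then there exists N_0 such that for all N ≥ N_0 the following holds: for every ψ ∈ C_c^∞((0,1)) with 0 ≤ ψ ≤ 1, if φ(i/N) = N ∫_{i/N}^{(i+1)/N} ψ(t) dt for all but at most k values of i ∈ {0, 1, …, N−1}, then ‖γ_r ∗ (φ − ψ)‖_{L^∞} < ε for all r > δ. -/
open MeasureTheory Filter Topology Real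
open scoped FourierTransform RealInnerProductSpace ENNReal

noncomputable section

variable {V : Type*} [NormedAddCommGroup V] [InnerProductSpace ℝ V]
  [FiniteDimensional ℝ V] [MeasurableSpace V] [BorelSpace V] [MeasureSpace V]

/-- convolution of two real-valued functions -/
def conv (f g : V → ℝ) (x : V) : ℝ := ∫ y, f y * g (x - y)

/-- the standard Gaussian `γ(x) = (2π)^{-n/2} exp(-|x|²/2)` -/
def gauss (x : V) : ℝ :=
  (2 * π) ^ (-(Module.finrank ℝ V : ℝ) / 2) * Real.exp (-‖x‖ ^ 2 / 2)

/-- the scaled function `f_r(x) = r^{-n} f(x/r)` -/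
def scaleFn (f : V → ℝ) (r : ℝ) (x : V) : ℝ := r⁻¹ ^ (Module.finrank ℝ V) * f (r⁻¹ • x)

/-- the scaled Gaussian `γ_ε` -/
def gaussSc (ε : ℝ) (x : V) : ℝ := scaleFn gauss ε x

/-- the squared `H^{1/2}` seminorm `∫ |ξ| |û(ξ)|² dξ` (extended-real valued) -/
def H12e (u : V → ℝ) : ℝ≥0∞ :=
  ∫⁻ ξ, (‖ξ‖₊ : ℝ≥0∞) * (‖𝓕 (fun x => (u x : ℂ)) ξ‖₊ : ℝ≥0∞) ^ 2

/-- divergence of a vector field on ℝⁿ -/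
def divg {n : ℕ} (φ : EuclideanSpace ℝ (Fin n) → EuclideanSpace ℝ (Fin n))
    (x : EuclideanSpace ℝ (Fin n)) : ℝ :=
  ∑ i, fderiv ℝ φ x (EuclideanSpace.single i 1) i

/-- perimeter of a set: `P(E) = sup { ∫_E div φ : φ ∈ C_c¹, ‖φ‖ ≤ 1 }` -/
def perim {n : ℕ} (E : Set (EuclideanSpace ℝ (Fin n))) : ℝ≥0∞ :=
  ⨆ (φ : EuclideanSpace ℝ (Fin n) → EuclideanSpace ℝ (Fin n))
    (_ : ContDiff ℝ 1 φ) (_ : HasCompactSupport φ) (_ : ∀ x, ‖φ x‖ ≤ 1),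
    ENNReal.ofReal (∫ x in E, divg φ x)

namespace LocalAvgAux

lemma abs_mul_exp_le (y : ℝ) : |y| * Real.exp (-y^2/2) ≤ 1 := by
  have h3 : |y| ≤ y^2/2 + 1 := by nlinarith [sq_nonneg (|y| - 1), sq_abs y]
  have h1 : |y| ≤ Real.exp (y^2/2) := h3.trans (by simpa using Real.add_one_le_exp (y^2/2))
  calc |y| * Real.exp (-y^2/2) ≤ Real.exp (y^2/2) * Real.exp (-y^2/2) :=
        mul_le_mul_of_nonneg_right h1 (Real.exp_nonneg _)
    _ = 1 := by rw [← Real.exp_add]; ring_nf; exact Real.exp_zero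

lemma gaussSc_apply (r x : ℝ) :
    gaussSc r x = r⁻¹ * ((2*π) ^ (-(1:ℝ)/2) * Real.exp (-(r⁻¹*x)^2/2)) := by
  unfold gaussSc scaleFn gauss
  rw [Module.finrank_self, pow_one, Nat.cast_one, smul_eq_mul, Real.norm_eq_abs, sq_abs]

lemma cst_pos : 0 < (2*π) ^ (-(1:ℝ)/2) := Real.rpow_pos_of_pos (by positivity) _

lemma cst_le_one : (2*π) ^ (-(1:ℝ)/2) ≤ 1 :=
  Real.rpow_le_one_of_one_le_of_nonpos (by nlinarith [pi_gt_three]) (by norm_num)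

lemma gaussSc_abs_le {r : ℝ} (hr : 0 < r) (x : ℝ) : |gaussSc r x| ≤ r⁻¹ := by
  rw [gaussSc_apply]
  have h1 : Real.exp (-(r⁻¹*x)^2/2) ≤ 1 := Real.exp_le_one_iff.mpr (by nlinarith [sq_nonneg (r⁻¹*x)])
  have h2 : (0:ℝ) < Real.exp (-(r⁻¹*x)^2/2) := Real.exp_pos _
  have hrn : (0:ℝ) ≤ r⁻¹ := inv_nonneg.mpr hr.le
  rw [abs_of_nonneg (mul_nonneg hrn (by positivity))]
  have h5 : (2*π) ^ (-(1:ℝ)/2) * Real.exp (-(r⁻¹*x)^2/2) ≤ 1 := by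
    nlinarith [cst_pos, cst_le_one]
  calc r⁻¹ * ((2*π) ^ (-(1:ℝ)/2) * Real.exp (-(r⁻¹*x)^2/2)) ≤ r⁻¹ * 1 :=
        mul_le_mul_of_nonneg_left h5 hrn
    _ = r⁻¹ := mul_one _

lemma gaussSc_hasDeriv {r : ℝ} (x : ℝ) :
    HasDerivAt (fun y : ℝ => gaussSc r y)
      (r⁻¹ * ((2*π)^(-(1:ℝ)/2) * (Real.exp (-(r⁻¹*x)^2/2) * (-(r⁻¹*x)*r⁻¹)))) x := by
  have h1 : HasDerivAt (fun y : ℝ => r⁻¹ * y) r⁻¹ x := by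
    simpa using (hasDerivAt_id x).const_mul r⁻¹
  have h2 : HasDerivAt (fun y : ℝ => -(r⁻¹*y)^2/2) (-(r⁻¹*x)*r⁻¹) x := by
    have := ((h1.pow 2).neg).div_const 2
    exact this.congr_deriv (by rw [show (2:ℕ) - 1 = 1 from rfl]; push_cast; ring)
  have h3 := ((h2.exp).const_mul ((2*π)^(-(1:ℝ)/2))).const_mul r⁻¹
  simp only [gaussSc_apply]
  exact h3

lemma gaussSc_lipschitz {r : ℝ} (hr : 0 < r) (a b : ℝ) :
    |gaussSc r a - gaussSc r b| ≤ (r⁻¹ * r⁻¹) * |a - b| := by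
  set c := (2*π) ^ (-(1:ℝ)/2) with hc
  have hbound : ∀ y : ℝ, ‖r⁻¹ * (c * (Real.exp (-(r⁻¹*y)^2/2) * (-(r⁻¹*y)*r⁻¹)))‖ ≤ r⁻¹ * r⁻¹ := by
    intro y
    have hrn : (0:ℝ) ≤ r⁻¹ := inv_nonneg.mpr hr.le
    have he : (0:ℝ) ≤ Real.exp (-(r⁻¹*y)^2/2) := (Real.exp_pos _).le
    have key := abs_mul_exp_le (r⁻¹*y)
    have h0 : r⁻¹ * (c * (Real.exp (-(r⁻¹*y)^2/2) * (-(r⁻¹*y)*r⁻¹)))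
        = -(r⁻¹ * r⁻¹ * (c * (Real.exp (-(r⁻¹*y)^2/2) * (r⁻¹*y)))) := by ring
    rw [Real.norm_eq_abs, h0, abs_neg]
    have heq : |r⁻¹ * r⁻¹ * (c * (Real.exp (-(r⁻¹*y)^2/2) * (r⁻¹*y)))|
        = r⁻¹ * r⁻¹ * (c * (Real.exp (-(r⁻¹*y)^2/2) * |r⁻¹*y|)) := by
      have hcn : (0:ℝ) ≤ c := cst_pos.le
      simp [abs_mul, abs_of_nonneg hrn, abs_of_nonneg hcn, abs_of_nonneg he]
    rw [heq]
    have h5 : c * (Real.exp (-(r⁻¹*y)^2/2) * |r⁻¹*y|) ≤ 1 := by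
      have h4 : Real.exp (-(r⁻¹*y)^2/2) * |r⁻¹*y| ≤ 1 := by rw [mul_comm]; exact key
      nlinarith [cst_pos, cst_le_one, mul_nonneg he (abs_nonneg (r⁻¹*y))]
    calc r⁻¹ * r⁻¹ * (c * (Real.exp (-(r⁻¹*y)^2/2) * |r⁻¹*y|)) ≤ r⁻¹ * r⁻¹ * 1 :=
          mul_le_mul_of_nonneg_left h5 (mul_nonneg hrn hrn)
      _ = r⁻¹ * r⁻¹ := mul_one _
  have key := convex_univ.norm_image_sub_le_of_norm_hasDerivWithin_le
    (f := fun y : ℝ => gaussSc r y)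
    (f' := fun y : ℝ => r⁻¹ * (c * (Real.exp (-(r⁻¹*y)^2/2) * (-(r⁻¹*y)*r⁻¹))))
    (fun y _ => (gaussSc_hasDeriv y).hasDerivWithinAt)
    (fun y _ => hbound y) (Set.mem_univ b) (Set.mem_univ a)
  simpa [Real.norm_eq_abs] using key

lemma gaussSc_continuous (r : ℝ) : Continuous (fun t : ℝ => gaussSc r t) := by
  have : (fun t : ℝ => gaussSc r t)
      = fun t => r⁻¹ * ((2*π) ^ (-(1:ℝ)/2) * Real.exp (-(r⁻¹*t)^2/2)) := funext (gaussSc_apply r)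
  rw [this]; fun_prop

end LocalAvgAux

set_option maxHeartbeats 1600000 in
/-- matching local averages on all but `k` of the intervals `[i/N,(i+1)/N]`
forces `‖γ_r ∗ (φ − ψ)‖_{L^∞} < ε` for all `r > δ`, once `N` is large enough. -/
theorem local_average_constraints (φ : ℝ → ℝ) (hφsm : ContDiff ℝ (⊤ : ℕ∞) φ)
    (hφsupp : HasCompactSupport φ) (hφloc : tsupport φ ⊆ Set.Ioo 0 1)
    (hφrange : ∀ x, 0 ≤ φ x ∧ φ x ≤ 1)
    (δ : ℝ) (hδ : 0 < δ) (ε : ℝ) (hε : 0 < ε) (k : ℕ) (hk : 0 < k) :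
    ∃ N₀ : ℕ, 1 ≤ N₀ ∧ ∀ N : ℕ, N₀ ≤ N →
      ∀ ψ : ℝ → ℝ, ContDiff ℝ (⊤ : ℕ∞) ψ → HasCompactSupport ψ → tsupport ψ ⊆ Set.Ioo 0 1 →
        (∀ x, 0 ≤ ψ x ∧ ψ x ≤ 1) →
        -- the average constraint holds for all but at most k indices i ∈ {0,…,N-1}
        (∃ S : Finset ℕ, S.card ≤ k ∧ ∀ i < N, i ∉ S →
          φ ((i : ℝ) / N) = (N : ℝ) * ∫ t in ((i : ℝ) / N)..(((i : ℝ) + 1) / N), ψ t) →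
        ∀ r : ℝ, δ < r →
          eLpNorm (conv (gaussSc r) (fun y => φ y - ψ y)) ⊤ volume < ENNReal.ofReal ε := by
  classical
  obtain ⟨M, hM⟩ := (hφsm.continuous_deriv (by simp)).bounded_above_of_compact_support hφsupp.deriv
  have hM0 : (0:ℝ) ≤ M := le_trans (norm_nonneg _) (hM 0)
  have hφlip : ∀ a b : ℝ, |φ a - φ b| ≤ M * |a - b| := by
    intro a b
    have key := convex_univ.norm_image_sub_le_of_norm_hasDerivWithin_le
      (f := φ) (f' := deriv φ)
      (fun y _ => ((hφsm.differentiable (by simp)) y).hasDerivAt.hasDerivWithinAt)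
      (fun y _ => hM y) (Set.mem_univ b) (Set.mem_univ a)
    simpa [Real.norm_eq_abs] using key
  have hδi : (0:ℝ) < δ⁻¹ := inv_pos.mpr hδ
  set C : ℝ := δ⁻¹*δ⁻¹ + δ⁻¹*M + δ⁻¹*(k:ℝ) with hCdef
  have hC0 : 0 ≤ C := by
    rw [hCdef]
    have hkk : (0:ℝ) ≤ (k:ℝ) := Nat.cast_nonneg k
    have q1 := mul_nonneg hδi.le hδi.le
    have q2 := mul_nonneg hδi.le hM0
    have q3 := mul_nonneg hδi.le hkk
    linarith
  refine ⟨⌈(C+1)/ε⌉₊ + 1, Nat.succ_le_succ (Nat.zero_le _), ?_⟩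
  intro N hN ψ hψsm hψsupp hψloc hψrange hcon r hr
  obtain ⟨S, hScard, hSavg⟩ := hcon
  have hN1 : 1 ≤ N := le_trans (Nat.succ_le_succ (Nat.zero_le _)) hN
  have hNpos : (0:ℝ) < (N:ℝ) := by exact_mod_cast hN1
  have hr0 : 0 < r := hδ.trans hr
  have hri : r⁻¹ ≤ δ⁻¹ := inv_anti₀ hδ hr.le
  have hrin : (0:ℝ) ≤ r⁻¹ := (inv_pos.mpr hr0).le
  set u : ℝ → ℝ := fun y => φ y - ψ y with hu
  have hu1 : ∀ t, |u t| ≤ 1 := by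
    intro t
    have h1 := hφrange t; have h2 := hψrange t
    rw [abs_le]
    constructor <;> simp only [hu] <;> [linarith [h1.1, h2.2]; linarith [h1.2, h2.1]]
  have hu0 : ∀ t, t ∉ Set.Ioo (0:ℝ) 1 → u t = 0 := by
    intro t ht
    have h1 : φ t = 0 := image_eq_zero_of_notMem_tsupport (fun hmem => ht (hφloc hmem))
    have h2 : ψ t = 0 := image_eq_zero_of_notMem_tsupport (fun hmem => ht (hψloc hmem))
    simp [hu, h1, h2]
  have hucont : Continuous u := (hφsm.continuous).sub (hψsm.continuous)
  have hφc : Continuous φ := hφsm.continuous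
  have hψc : Continuous ψ := hψsm.continuous
  have hgc : Continuous (fun t : ℝ => gaussSc r t) := LocalAvgAux.gaussSc_continuous r
  have hpt : ∀ x : ℝ, |conv (gaussSc r) u x| ≤ C / N := by
    intro x
    set F : ℝ → ℝ := fun t => gaussSc r (x - t) * u t with hF
    have hFcont : Continuous F := (hgc.comp (continuous_const.sub continuous_id)).mul hucont
    have hstep1 : conv (gaussSc r) u x = ∫ t, F t := by
      have h := MeasureTheory.integral_sub_left_eq_self
        (fun y => gaussSc r y * u (x - y)) volume x
      calc conv (gaussSc r) u x = ∫ y, gaussSc r y * u (x - y) := rfl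
        _ = ∫ t, F t := by
            rw [← h]
            congr 1
            funext t
            simp [hF, sub_sub_cancel]
    have hF0 : ∀ t ∉ Set.Ioc (0:ℝ) 1, F t = 0 := by
      intro t ht
      have h1 : t ∉ Set.Ioo (0:ℝ) 1 := fun hmem => ht (Set.Ioo_subset_Ioc_self hmem)
      simp [hF, hu0 t h1]
    have hstep2 : (∫ t, F t) = ∫ t in (0:ℝ)..1, F t := by
      rw [intervalIntegral.integral_of_le zero_le_one,
        setIntegral_eq_integral_of_forall_compl_eq_zero hF0]
    set a : ℕ → ℝ := fun i => (i:ℝ)/(N:ℝ) with ha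
    have hint : ∀ m, m < N → IntervalIntegrable F volume (a m) (a (m+1)) :=
      fun m _ => hFcont.intervalIntegrable _ _
    have hsum := intervalIntegral.sum_integral_adjacent_intervals (f := F) (μ := volume) hint
    have ha0 : a 0 = 0 := by simp [ha]
    have haN : a N = 1 := by
      simp only [ha]
      exact div_self hNpos.ne'
    rw [ha0, haN] at hsum
    set K : ℝ := r⁻¹*r⁻¹/((N:ℝ)*N) + r⁻¹*M/((N:ℝ)*N) with hK
    have hii : ∀ i ∈ Finset.range N, |∫ t in a i..a (i+1), F t|
        ≤ K + (if i ∈ S then r⁻¹/(N:ℝ) else 0) := by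
      intro i hi
      have hiN : i < N := Finset.mem_range.mp hi
      simp only [ha]
      push_cast
      have hle : (i:ℝ)/N ≤ ((i:ℝ)+1)/N := by gcongr; linarith
      have hdiff : ((i:ℝ)+1)/N - (i:ℝ)/N = 1/N := by ring
      -- bound on |A| for all i
      have hA_all : |∫ t in ((i:ℝ)/N)..(((i:ℝ)+1)/N), u t| ≤ 1/(N:ℝ) := by
        have hbd : ∀ t ∈ Set.uIoc ((i:ℝ)/N) (((i:ℝ)+1)/N), ‖u t‖ ≤ 1 := fun t _ => by
          simpa [Real.norm_eq_abs] using hu1 t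
        have h := intervalIntegral.norm_integral_le_of_norm_le_const hbd
        calc |∫ t in ((i:ℝ)/N)..(((i:ℝ)+1)/N), u t|
            ≤ 1 * |((i:ℝ)+1)/N - (i:ℝ)/N| := h
          _ = 1/(N:ℝ) := by rw [hdiff, abs_of_nonneg (by positivity)]; ring
      have hA_good : i ∉ S → |∫ t in ((i:ℝ)/N)..(((i:ℝ)+1)/N), u t| ≤ M/((N:ℝ)*N) := by
        intro hiS
        have havg := hSavg i hiN hiS
        have hψint : (∫ t in ((i:ℝ)/N)..(((i:ℝ)+1)/N), ψ t) = φ ((i:ℝ)/N) / N := by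
          rw [havg]
          field_simp
        have hsub : (∫ t in ((i:ℝ)/N)..(((i:ℝ)+1)/N), u t)
            = ∫ t in ((i:ℝ)/N)..(((i:ℝ)+1)/N), (φ t - φ ((i:ℝ)/N)) := by
          simp only [hu]
          rw [intervalIntegral.integral_sub (hφc.intervalIntegrable _ _)
              (hψc.intervalIntegrable _ _), hψint,
            intervalIntegral.integral_sub (hφc.intervalIntegrable _ _)
              (intervalIntegrable_const),
            intervalIntegral.integral_const, smul_eq_mul, hdiff]
          ring
        rw [hsub]
        have hbd : ∀ t ∈ Set.uIoc ((i:ℝ)/N) (((i:ℝ)+1)/N),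
            ‖φ t - φ ((i:ℝ)/N)‖ ≤ M * (1/N) := by
          intro t ht
          rw [Set.uIoc_of_le hle] at ht
          have h1 : |t - (i:ℝ)/N| ≤ 1/N := by
            rw [abs_of_nonneg (by linarith [ht.1])]
            linarith [ht.2]
          calc ‖φ t - φ ((i:ℝ)/N)‖ = |φ t - φ ((i:ℝ)/N)| := Real.norm_eq_abs _
            _ ≤ M * |t - (i:ℝ)/N| := hφlip t _
            _ ≤ M * (1/N) := mul_le_mul_of_nonneg_left h1 hM0
        have h := intervalIntegral.norm_integral_le_of_norm_le_const hbd
        calc |∫ t in ((i:ℝ)/N)..(((i:ℝ)+1)/N), (φ t - φ ((i:ℝ)/N))|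
            ≤ (M * (1/N)) * |((i:ℝ)+1)/N - (i:ℝ)/N| := h
          _ = M/((N:ℝ)*N) := by rw [hdiff, abs_of_nonneg (by positivity)]; field_simp
      -- split the integral
      have hint1 : IntervalIntegrable
          (fun t => (gaussSc r (x - t) - gaussSc r (x - (i:ℝ)/N)) * u t)
          volume ((i:ℝ)/N) (((i:ℝ)+1)/N) :=
        (((hgc.comp (continuous_const.sub continuous_id)).sub continuous_const).mul
          hucont).intervalIntegrable _ _
      have hint2 : IntervalIntegrable (fun t => gaussSc r (x - (i:ℝ)/N) * u t)
          volume ((i:ℝ)/N) (((i:ℝ)+1)/N) :=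
        (continuous_const.mul hucont).intervalIntegrable _ _
      have hFsplit : (∫ t in ((i:ℝ)/N)..(((i:ℝ)+1)/N), F t)
          = (∫ t in ((i:ℝ)/N)..(((i:ℝ)+1)/N),
              (gaussSc r (x - t) - gaussSc r (x - (i:ℝ)/N)) * u t)
            + gaussSc r (x - (i:ℝ)/N) * ∫ t in ((i:ℝ)/N)..(((i:ℝ)+1)/N), u t := by
        rw [← intervalIntegral.integral_const_mul, ← intervalIntegral.integral_add hint1 hint2]
        apply intervalIntegral.integral_congr
        intro t _
        simp only [hF]
        ring
      rw [hFsplit]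
      have hB1 : |∫ t in ((i:ℝ)/N)..(((i:ℝ)+1)/N),
          (gaussSc r (x - t) - gaussSc r (x - (i:ℝ)/N)) * u t|
          ≤ r⁻¹*r⁻¹/((N:ℝ)*N) := by
        have hbd : ∀ t ∈ Set.uIoc ((i:ℝ)/N) (((i:ℝ)+1)/N),
            ‖(gaussSc r (x - t) - gaussSc r (x - (i:ℝ)/N)) * u t‖ ≤ r⁻¹*r⁻¹*(1/N) := by
          intro t ht
          rw [Set.uIoc_of_le hle] at ht
          have h1 : |t - (i:ℝ)/N| ≤ 1/N := by
            rw [abs_of_nonneg (by linarith [ht.1])]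
            linarith [ht.2]
          have h2 := LocalAvgAux.gaussSc_lipschitz hr0 (x - t) (x - (i:ℝ)/N)
          have h3 : |(x - t) - (x - (i:ℝ)/N)| = |t - (i:ℝ)/N| := by
            rw [show (x - t) - (x - (i:ℝ)/N) = -(t - (i:ℝ)/N) from by ring, abs_neg]
          rw [Real.norm_eq_abs, abs_mul]
          have h4 : |gaussSc r (x - t) - gaussSc r (x - (i:ℝ)/N)| ≤ r⁻¹*r⁻¹*(1/N) := by
            calc |gaussSc r (x - t) - gaussSc r (x - (i:ℝ)/N)|
                ≤ r⁻¹*r⁻¹*|(x - t) - (x - (i:ℝ)/N)| := h2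
              _ = r⁻¹*r⁻¹*|t - (i:ℝ)/N| := by rw [h3]
              _ ≤ r⁻¹*r⁻¹*(1/N) := mul_le_mul_of_nonneg_left h1 (mul_nonneg hrin hrin)
          calc |gaussSc r (x - t) - gaussSc r (x - (i:ℝ)/N)| * |u t|
              ≤ (r⁻¹*r⁻¹*(1/N)) * 1 :=
                mul_le_mul h4 (hu1 t) (abs_nonneg _)
                  (mul_nonneg (mul_nonneg hrin hrin) (by positivity))
            _ = r⁻¹*r⁻¹*(1/N) := mul_one _
        have h := intervalIntegral.norm_integral_le_of_norm_le_const hbd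
        calc |∫ t in ((i:ℝ)/N)..(((i:ℝ)+1)/N),
            (gaussSc r (x - t) - gaussSc r (x - (i:ℝ)/N)) * u t|
            ≤ (r⁻¹*r⁻¹*(1/N)) * |((i:ℝ)+1)/N - (i:ℝ)/N| := h
          _ = r⁻¹*r⁻¹/((N:ℝ)*N) := by
            rw [hdiff, abs_of_nonneg (by positivity)]
            field_simp
      have hAbound : |∫ t in ((i:ℝ)/N)..(((i:ℝ)+1)/N), u t|
          ≤ M/((N:ℝ)*N) + (if i ∈ S then 1/(N:ℝ) else 0) := by
        by_cases hiS : i ∈ S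
        · have hMN : (0:ℝ) ≤ M/((N:ℝ)*N) := by positivity
          simp only [hiS, if_true]
          linarith [hA_all]
        · simp only [hiS, if_false, add_zero]
          exact hA_good hiS
      have hg : |gaussSc r (x - (i:ℝ)/N)| ≤ r⁻¹ := LocalAvgAux.gaussSc_abs_le hr0 _
      have h6 : |gaussSc r (x - (i:ℝ)/N) * ∫ t in ((i:ℝ)/N)..(((i:ℝ)+1)/N), u t|
          ≤ r⁻¹ * (M/((N:ℝ)*N) + (if i ∈ S then 1/(N:ℝ) else 0)) := by
        rw [abs_mul]
        exact mul_le_mul hg hAbound (abs_nonneg _) hrin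
      have hiteB : r⁻¹ * (M/((N:ℝ)*N) + (if i ∈ S then 1/(N:ℝ) else 0))
          = r⁻¹*M/((N:ℝ)*N) + (if i ∈ S then r⁻¹/(N:ℝ) else 0) := by
        by_cases hiS : i ∈ S <;> simp only [hiS, if_true, if_false] <;> ring
      rw [hiteB] at h6
      calc |(∫ t in ((i:ℝ)/N)..(((i:ℝ)+1)/N),
            (gaussSc r (x - t) - gaussSc r (x - (i:ℝ)/N)) * u t)
          + gaussSc r (x - (i:ℝ)/N) * ∫ t in ((i:ℝ)/N)..(((i:ℝ)+1)/N), u t|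
          ≤ |∫ t in ((i:ℝ)/N)..(((i:ℝ)+1)/N),
              (gaussSc r (x - t) - gaussSc r (x - (i:ℝ)/N)) * u t|
            + |gaussSc r (x - (i:ℝ)/N) * ∫ t in ((i:ℝ)/N)..(((i:ℝ)+1)/N), u t| := abs_add_le _ _
        _ ≤ K + (if i ∈ S then r⁻¹/(N:ℝ) else 0) := by
            rw [hK]; linarith [hB1, h6]
    have hsum_bound : |conv (gaussSc r) u x| ≤ ∑ i ∈ Finset.range N,
        (K + (if i ∈ S then r⁻¹/(N:ℝ) else 0)) := by
      rw [hstep1, hstep2, ← hsum]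
      calc |∑ i ∈ Finset.range N, ∫ t in a i..a (i+1), F t|
          ≤ ∑ i ∈ Finset.range N, |∫ t in a i..a (i+1), F t| := Finset.abs_sum_le_sum_abs _ _
        _ ≤ _ := Finset.sum_le_sum hii
    have htotal : (∑ i ∈ Finset.range N, (K + (if i ∈ S then r⁻¹/(N:ℝ) else 0))) ≤ C / N := by
      rw [Finset.sum_add_distrib, Finset.sum_const, Finset.card_range, ← Finset.sum_filter,
        Finset.sum_const, nsmul_eq_mul, nsmul_eq_mul]
      have hcard : ((Finset.filter (· ∈ S) (Finset.range N)).card : ℝ) ≤ (k:ℝ) := by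
        exact_mod_cast le_trans
          (Finset.card_le_card fun j hj => (Finset.mem_filter.mp hj).2) hScard
      have hrdN : (0:ℝ) ≤ r⁻¹/(N:ℝ) := by positivity
      have h2 : ((Finset.filter (· ∈ S) (Finset.range N)).card : ℝ) * (r⁻¹/(N:ℝ))
          ≤ (k:ℝ) * (r⁻¹/(N:ℝ)) := mul_le_mul_of_nonneg_right hcard hrdN
      have hNK : (N:ℝ) * K = (r⁻¹*r⁻¹ + r⁻¹*M)/(N:ℝ) := by
        rw [hK]; field_simp
      have hnum : r⁻¹*r⁻¹ + r⁻¹*M + (k:ℝ)*r⁻¹ ≤ C := by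
        have e1 : r⁻¹*r⁻¹ ≤ δ⁻¹*δ⁻¹ := mul_le_mul hri hri hrin hδi.le
        have e2 : r⁻¹*M ≤ δ⁻¹*M := mul_le_mul_of_nonneg_right hri hM0
        have e3 : (k:ℝ)*r⁻¹ ≤ (k:ℝ)*δ⁻¹ := by
          apply mul_le_mul_of_nonneg_left hri (Nat.cast_nonneg k)
        rw [hCdef]; nlinarith
      have hfinal : (r⁻¹*r⁻¹ + r⁻¹*M)/(N:ℝ) + (k:ℝ)*(r⁻¹/(N:ℝ)) ≤ C/(N:ℝ) := by
        have heq : (r⁻¹*r⁻¹ + r⁻¹*M)/(N:ℝ) + (k:ℝ)*(r⁻¹/(N:ℝ))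
            = (r⁻¹*r⁻¹ + r⁻¹*M + (k:ℝ)*r⁻¹)/(N:ℝ) := by ring
        rw [heq]
        exact (div_le_div_iff_of_pos_right hNpos).mpr hnum
      linarith [h2, hNK, hfinal]
    linarith [hsum_bound, htotal]
  have hlt : C / N < ε := by
    have h1 : ((⌈(C+1)/ε⌉₊ : ℝ) + 1) ≤ (N:ℝ) := by exact_mod_cast hN
    have h2 : (C+1)/ε ≤ (⌈(C+1)/ε⌉₊ : ℝ) := Nat.le_ceil _
    have h3 : (C+1)/ε < (N:ℝ) := by linarith
    rw [div_lt_iff₀ hNpos]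
    rw [div_lt_iff₀ hε] at h3
    nlinarith
  calc eLpNorm (conv (gaussSc r) u) ⊤ volume
      = eLpNormEssSup (conv (gaussSc r) u) volume := eLpNorm_exponent_top
    _ ≤ ENNReal.ofReal (C/N) := eLpNormEssSup_le_of_ae_bound
        (Filter.Eventually.of_forall (fun x => by simpa [Real.norm_eq_abs] using hpt x))
    _ < ENNReal.ofReal ε := (ENNReal.ofReal_lt_ofReal_iff hε).mpr hlt
end
end

section
/- Let f be a smooth function on R with ∫ f = 0 and ∫ |x| |f(x)| dx < ∞, and let c_f = lim_{r→0⁺} (1/r) ‖f_r ∗ H‖_{L^2((−1,1))}^2, where H is the Heaviside function (this limit exists). If u ∈ BV(R) is piecewise constant with jumps at finitely many points x_1, …, x_N, then lim_{r→0⁺} (1/r) ‖f_r ∗ u‖_{L^2(R)}^2 = c_f ∑_{j=1}^N |u⁺(x_j) − u⁻(x_j)|^2. -/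
open MeasureTheory Filter Topology Real
open scoped FourierTransform RealInnerProductSpace ENNReal

noncomputable section

variable {V : Type*} [NormedAddCommGroup V] [InnerProductSpace ℝ V]
  [FiniteDimensional ℝ V] [MeasurableSpace V] [BorelSpace V] [MeasureSpace V]

section
open Set

namespace PCLHelper

/-- The primitive of `f`. -/
def primF (f : ℝ → ℝ) (s : ℝ) : ℝ := ∫ t in Set.Iic s, f t

variable {f : ℝ → ℝ} {r : ℝ}

lemma primF_cont (hfi : Integrable f) : Continuous (primF f) := by
  have h : primF f = fun s => (∫ t in Set.Iic (0:ℝ), f t) + ∫ t in (0:ℝ)..s, f t := by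
    funext s
    rw [← intervalIntegral.integral_Iic_sub_Iic hfi.integrableOn hfi.integrableOn]
    simp [primF]
  rw [h]
  exact continuous_const.add
    (intervalIntegral.continuous_primitive (fun a b => hfi.intervalIntegrable) 0)

lemma primF_abs_le (hfi : Integrable f) (s : ℝ) : |primF f s| ≤ ∫ t, |f t| := by
  have h1 : |primF f s| ≤ ∫ t in Set.Iic s, |f t| := by
    simpa [Real.norm_eq_abs, primF] using
      norm_integral_le_integral_norm (μ := volume.restrict (Set.Iic s)) f
  exact h1.trans (setIntegral_le_integral hfi.abs
    (Filter.Eventually.of_forall fun t => abs_nonneg _))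

lemma primF_tendsto_atTop (hfi : Integrable f) :
    Tendsto (primF f) atTop (𝓝 (∫ t, f t)) := by
  have h := MeasureTheory.tendsto_integral_filter_of_dominated_convergence
      (μ := volume) (l := atTop) (F := fun (s : ℝ) (t : ℝ) => Set.indicator (Set.Iic s) f t)
      (f := f) (bound := fun t => |f t|)
      (Filter.Eventually.of_forall fun s => hfi.1.indicator measurableSet_Iic)
      (Filter.Eventually.of_forall fun s => Filter.Eventually.of_forall fun t => by
        simpa [Real.norm_eq_abs] using norm_indicator_le_norm_self (f := f) (a := t))
      hfi.abs
      (Filter.Eventually.of_forall fun t => by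
        refine tendsto_const_nhds.congr' ?_
        filter_upwards [eventually_ge_atTop t] with s hs
        exact (Set.indicator_of_mem (Set.mem_Iic.2 hs) f).symm)
  convert h using 2 with s
  exact (integral_indicator measurableSet_Iic).symm

lemma primF_tendsto_atBot (hfi : Integrable f) :
    Tendsto (primF f) atBot (𝓝 0) := by
  have h := MeasureTheory.tendsto_integral_filter_of_dominated_convergence
      (μ := volume) (l := atBot) (F := fun (s : ℝ) (t : ℝ) => Set.indicator (Set.Iic s) f t)
      (f := fun _ => (0:ℝ)) (bound := fun t => |f t|)
      (Filter.Eventually.of_forall fun s => hfi.1.indicator measurableSet_Iic)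
      (Filter.Eventually.of_forall fun s => Filter.Eventually.of_forall fun t => by
        simpa [Real.norm_eq_abs] using norm_indicator_le_norm_self (f := f) (a := t))
      hfi.abs
      (Filter.Eventually.of_forall fun t => by
        refine tendsto_const_nhds.congr' ?_
        filter_upwards [eventually_lt_atBot t] with s hs
        exact (Set.indicator_of_notMem (by simpa [Set.mem_Iic] using not_le.2 hs) f).symm)
  simp only [integral_zero] at h
  convert h using 2 with s
  exact (integral_indicator measurableSet_Iic).symm

lemma lint_aux_Iic (g : ℝ → ℝ≥0∞) (hg : Measurable g) :
    (∫⁻ s in Set.Iic (0:ℝ), ∫⁻ t in Set.Iic s, g t) ≤ ∫⁻ t, g t * ENNReal.ofReal |t| := by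
  have hmeas : Measurable (fun p : ℝ × ℝ => (Set.Iic p.1).indicator g p.2) := by
    have : (fun p : ℝ × ℝ => (Set.Iic p.1).indicator g p.2)
        = fun p : ℝ × ℝ => if p.2 ≤ p.1 then g p.2 else 0 := by
      funext p; simp [Set.indicator_apply, Set.mem_Iic]
    rw [this]
    exact Measurable.ite (measurableSet_le measurable_snd measurable_fst)
      (hg.comp measurable_snd) measurable_const
  calc (∫⁻ s in Set.Iic (0:ℝ), ∫⁻ t in Set.Iic s, g t)
      = ∫⁻ s in Set.Iic (0:ℝ), ∫⁻ t, (Set.Iic s).indicator g t := by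
        refine lintegral_congr fun s => ?_
        rw [lintegral_indicator measurableSet_Iic]
    _ = ∫⁻ t, ∫⁻ s in Set.Iic (0:ℝ), (Set.Iic s).indicator g t := by
        exact lintegral_lintegral_swap hmeas.aemeasurable
    _ ≤ ∫⁻ t, g t * ENNReal.ofReal |t| := by
        refine lintegral_mono fun t => ?_
        have h1 : (fun s => (Set.Iic s).indicator g t)
            = (Set.Ici t).indicator (fun _ => g t) := by
          funext s; simp [Set.indicator_apply, Set.mem_Iic, Set.mem_Ici]
        rw [h1, lintegral_indicator measurableSet_Ici, setLIntegral_const,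
          Measure.restrict_apply measurableSet_Ici]
        rw [Set.Ici_inter_Iic, Real.volume_Icc]
        exact mul_le_mul_right (ENNReal.ofReal_le_ofReal (by simpa using neg_le_abs t)) _

lemma lint_aux_Ioi (g : ℝ → ℝ≥0∞) (hg : Measurable g) :
    (∫⁻ s in Set.Ioi (0:ℝ), ∫⁻ t in Set.Ioi s, g t) ≤ ∫⁻ t, g t * ENNReal.ofReal |t| := by
  have hmeas : Measurable (fun p : ℝ × ℝ => (Set.Ioi p.1).indicator g p.2) := by
    have : (fun p : ℝ × ℝ => (Set.Ioi p.1).indicator g p.2)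
        = fun p : ℝ × ℝ => if p.1 < p.2 then g p.2 else 0 := by
      funext p; simp [Set.indicator_apply, Set.mem_Ioi]
    rw [this]
    exact Measurable.ite (measurableSet_lt measurable_fst measurable_snd)
      (hg.comp measurable_snd) measurable_const
  calc (∫⁻ s in Set.Ioi (0:ℝ), ∫⁻ t in Set.Ioi s, g t)
      = ∫⁻ s in Set.Ioi (0:ℝ), ∫⁻ t, (Set.Ioi s).indicator g t := by
        refine lintegral_congr fun s => ?_
        rw [lintegral_indicator measurableSet_Ioi]
    _ = ∫⁻ t, ∫⁻ s in Set.Ioi (0:ℝ), (Set.Ioi s).indicator g t := by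
        exact lintegral_lintegral_swap hmeas.aemeasurable
    _ ≤ ∫⁻ t, g t * ENNReal.ofReal |t| := by
        refine lintegral_mono fun t => ?_
        have h1 : (fun s => (Set.Ioi s).indicator g t)
            = (Set.Iio t).indicator (fun _ => g t) := by
          funext s; simp [Set.indicator_apply, Set.mem_Ioi, Set.mem_Iio]
        rw [h1, lintegral_indicator measurableSet_Iio, setLIntegral_const,
          Measure.restrict_apply measurableSet_Iio]
        rw [Set.Iio_inter_Ioi, Real.volume_Ioo]
        exact mul_le_mul_right (ENNReal.ofReal_le_ofReal (by simpa using le_abs_self t)) _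

lemma primF_integrable (hfm : Measurable f) (hfi : Integrable f) (hf0 : (∫ t, f t) = 0)
    (hfd : Integrable fun t => |t| * |f t|) : Integrable (primF f) := by
  have hbd : (∫⁻ t, (‖f t‖₊ : ℝ≥0∞) * ENNReal.ofReal |t|) < ⊤ := by
    have heq : (fun t => (‖f t‖₊ : ℝ≥0∞) * ENNReal.ofReal |t|)
        = fun t => (‖|t| * |f t|‖₊ : ℝ≥0∞) := by
      funext t
      rw [← enorm_eq_nnnorm, ← enorm_eq_nnnorm, ← ofReal_norm, ← ofReal_norm,
        ← ENNReal.ofReal_mul (norm_nonneg _)]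
      simp [Real.norm_eq_abs, abs_mul, mul_comm]
    rw [heq]
    exact hfd.2
  refine ⟨(primF_cont hfi).aestronglyMeasurable, ?_⟩
  have hsplit := lintegral_add_compl (fun s => (‖primF f s‖₊ : ℝ≥0∞))
    (measurableSet_Iic (a := (0:ℝ))) (μ := volume)
  have hshow : HasFiniteIntegral (primF f) volume ↔
      (∫⁻ s, (‖primF f s‖₊ : ℝ≥0∞) ∂volume) < ⊤ := Iff.rfl
  rw [hshow, ← hsplit]
  have h1 : (∫⁻ s in Set.Iic (0:ℝ), (‖primF f s‖₊ : ℝ≥0∞))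
      ≤ ∫⁻ t, (‖f t‖₊ : ℝ≥0∞) * ENNReal.ofReal |t| := by
    refine le_trans (lintegral_mono fun s => ?_) (lint_aux_Iic _ hfm.nnnorm.coe_nnreal_ennreal)
    exact enorm_integral_le_lintegral_enorm _
  have h2 : (∫⁻ s in (Set.Iic (0:ℝ))ᶜ, (‖primF f s‖₊ : ℝ≥0∞))
      ≤ ∫⁻ t, (‖f t‖₊ : ℝ≥0∞) * ENNReal.ofReal |t| := by
    rw [Set.compl_Iic]
    refine le_trans (lintegral_mono fun s => ?_) (lint_aux_Ioi _ hfm.nnnorm.coe_nnreal_ennreal)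
    have hval : primF f s = -∫ t in Set.Ioi s, f t := by
      have := intervalIntegral.integral_Iic_add_Ioi (b := s) hfi.integrableOn hfi.integrableOn
      rw [hf0] at this
      have : primF f s = -∫ t in Set.Ioi s, f t := by
        unfold primF; linarith
      exact this
    rw [hval]
    simpa [enorm_eq_nnnorm] using enorm_integral_le_lintegral_enorm (μ := volume.restrict (Set.Ioi s)) f
  exact lt_of_le_of_lt (add_le_add h1 h2) (by
    exact ENNReal.add_lt_top.2 ⟨hbd, hbd⟩)



lemma conv_scale (hr : 0 < r) (v : ℝ → ℝ) (y : ℝ) :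
    conv (scaleFn f r) v y = ∫ s, f s * v (y - r * s) := by
  have key : (fun t => scaleFn f r t * v (y - t))
      = fun t => r⁻¹ • ((fun s => f s * v (y - r * s)) (t / r)) := by
    funext t
    have hrt : r * (t / r) = t := by field_simp
    show r⁻¹ ^ (Module.finrank ℝ ℝ) * f (r⁻¹ • t) * v (y - t)
        = r⁻¹ • (f (t / r) * v (y - r * (t / r)))
    rw [Module.finrank_self, pow_one, smul_eq_mul, smul_eq_mul, hrt, div_eq_inv_mul, mul_assoc]
  show (∫ t, scaleFn f r t * v (y - t)) = _
  rw [key, integral_smul, MeasureTheory.Measure.integral_comp_div (fun s => f s * v (y - r * s)) r,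
    abs_of_pos hr, smul_smul, inv_mul_cancel₀ hr.ne', one_smul]

lemma conv_heaviside (hr : 0 < r) (y : ℝ) :
    conv (scaleFn f r) (fun z => if 0 ≤ z then (1 : ℝ) else 0) y = primF f (y / r) := by
  rw [conv_scale hr]
  have h : (fun s => f s * (if 0 ≤ y - r * s then (1 : ℝ) else 0))
      = (Set.Iic (y / r)).indicator f := by
    funext s
    have hiff : 0 ≤ y - r * s ↔ s ≤ y / r := by
      rw [sub_nonneg, le_div_iff₀ hr, mul_comm]
    simp only [Set.indicator_apply, Set.mem_Iic, ← hiff]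
    by_cases hc : 0 ≤ y - r * s <;> simp [hc]
  rw [h, integral_indicator measurableSet_Iic]
  rfl

lemma conv_pc (hfi : Integrable f) (hf0 : (∫ t, f t) = 0) {N : ℕ} (x d : Fin N → ℝ) (a : ℝ)
    (hr : 0 < r) (y : ℝ) :
    conv (scaleFn f r) (fun z => a + ∑ j, d j * (if x j ≤ z then 1 else 0)) y
      = ∑ j, d j * primF f ((y - x j) / r) := by
  rw [conv_scale hr]
  have hrw : (fun s => f s * (a + ∑ j, d j * (if x j ≤ y - r * s then (1 : ℝ) else 0)))
      = fun s => a * f s + ∑ j, d j * (Set.Iic ((y - x j) / r)).indicator f s := by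
    funext s
    have h : ∀ j, (x j ≤ y - r * s) ↔ s ≤ (y - x j) / r := fun j => by
      rw [le_div_iff₀ hr, mul_comm, ← le_sub_comm]
    rw [mul_add, mul_comm (f s) a, Finset.mul_sum]
    congr 1
    refine Finset.sum_congr rfl fun j _ => ?_
    simp only [Set.indicator_apply, Set.mem_Iic, ← h j]
    by_cases hc : x j ≤ y - r * s <;> simp [hc] <;> ring
  rw [hrw, integral_add (hfi.const_mul a)
      (integrable_finset_sum _ fun j _ => ((hfi.indicator measurableSet_Iic).const_mul (d j))),
    integral_const_mul, hf0, mul_zero, zero_add,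
    integral_finset_sum _ fun j _ => ((hfi.indicator measurableSet_Iic).const_mul (d j))]
  refine Finset.sum_congr rfl fun j _ => ?_
  rw [integral_const_mul, integral_indicator measurableSet_Iic]
  rfl

end PCLHelper

end

/-- for piecewise-constant `u` with finitely many jumps of heights `d j` at
distinct points `x j`, `lim_{r→0⁺} (1/r)‖f_r ∗ u‖_{L²}² = c_f ∑_j |u⁺(x_j) − u⁻(x_j)|²`,
where `c_f` is the corresponding limit for the Heaviside function. -/
theorem piecewise_constant_limit (f : ℝ → ℝ) (hfsm : ContDiff ℝ (⊤ : ℕ∞) f)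
    (hfi : Integrable f) (hf0 : (∫ x, f x) = 0)
    (hfd : Integrable fun x : ℝ => |x| * |f x|)
    (c : ℝ)
    -- `c = c_f` is the limit for the Heaviside function (asserted to exist)
    (hc : Filter.Tendsto
      (fun r : ℝ => r⁻¹ * ∫ x in Set.Ioo (-1 : ℝ) 1,
        (conv (scaleFn f r) (fun y => if 0 ≤ y then (1 : ℝ) else 0) x) ^ 2)
      (𝓝[>] (0 : ℝ)) (𝓝 c))
    (N : ℕ) (x : Fin N → ℝ) (hx : Function.Injective x)
    (d : Fin N → ℝ) (hd : ∀ j, d j ≠ 0) (a : ℝ) (u : ℝ → ℝ)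
    -- `u` is piecewise constant, jumping by `d j` at `x j`
    (hu : u = fun y => a + ∑ j, d j * (if x j ≤ y then 1 else 0)) :
    Filter.Tendsto (fun r : ℝ => r⁻¹ * ∫ y, (conv (scaleFn f r) u y) ^ 2)
      (𝓝[>] (0 : ℝ)) (𝓝 (c * ∑ j, d j ^ 2)) := by
  subst hu
  set F := PCLHelper.primF f with hF
  have hfm : Measurable f := hfsm.continuous.measurable
  have hFc : Continuous F := PCLHelper.primF_cont hfi
  have hFi : Integrable F := PCLHelper.primF_integrable hfm hfi hf0 hfd
  set M : ℝ := ∫ t, |f t| with hM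
  have hFb : ∀ s, ‖F s‖ ≤ M := fun s => by
    simpa [Real.norm_eq_abs] using PCLHelper.primF_abs_le hfi s
  have hFtop : Tendsto F atTop (𝓝 0) := by
    have := PCLHelper.primF_tendsto_atTop hfi
    rwa [hf0] at this
  have hFbot : Tendsto F atBot (𝓝 0) := PCLHelper.primF_tendsto_atBot hfi
  set cF : ℝ := ∫ s, F s * F s with hcF
  -- cross terms tend to zero
  have hcross : ∀ T : ℝ, T ≠ 0 →
      Tendsto (fun r : ℝ => ∫ s, F s * F (s + T / r)) (𝓝[>] (0 : ℝ)) (𝓝 0) := by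
    intro T hT
    have h := MeasureTheory.tendsto_integral_filter_of_dominated_convergence
      (μ := volume) (l := 𝓝[>] (0 : ℝ))
      (F := fun (r : ℝ) (s : ℝ) => F s * F (s + T / r)) (f := fun _ => (0 : ℝ))
      (bound := fun s => |F s| * M)
      (Eventually.of_forall fun r =>
        (hFc.aestronglyMeasurable.mul
          ((hFc.comp (continuous_id.add continuous_const)).aestronglyMeasurable)))
      (Eventually.of_forall fun r => Eventually.of_forall fun s => by
        rw [Real.norm_eq_abs, abs_mul]
        exact mul_le_mul_of_nonneg_left
          (by simpa [Real.norm_eq_abs] using hFb (s + T / r)) (abs_nonneg _))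
      (hFi.abs.mul_const M)
      (Eventually.of_forall fun s => by
        have harg : Tendsto (fun r : ℝ => F (s + T / r)) (𝓝[>] (0 : ℝ)) (𝓝 0) := by
          rcases hT.lt_or_gt with hTn | hTp
          · refine hFbot.comp ?_
            have h1 : Tendsto (fun r : ℝ => T / r) (𝓝[>] (0 : ℝ)) atBot := by
              simp only [div_eq_mul_inv]
              exact (tendsto_const_mul_atBot_of_neg hTn).2 tendsto_inv_nhdsGT_zero
            exact tendsto_atBot_add_const_left _ s h1
          · refine hFtop.comp ?_
            have h1 : Tendsto (fun r : ℝ => T / r) (𝓝[>] (0 : ℝ)) atTop := by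
              simp only [div_eq_mul_inv]
              exact tendsto_inv_nhdsGT_zero.const_mul_atTop hTp
            exact tendsto_atTop_add_const_left _ s h1
        simpa using tendsto_const_nhds.mul harg)
    simpa using h
  -- identification of c with cF
  have hident : Tendsto
      (fun r : ℝ => r⁻¹ * ∫ x_1 in Set.Ioo (-1 : ℝ) 1,
        (conv (scaleFn f r) (fun y => if 0 ≤ y then (1 : ℝ) else 0) x_1) ^ 2)
      (𝓝[>] (0 : ℝ)) (𝓝 cF) := by
    have heq : ∀ r ∈ Set.Ioi (0 : ℝ),
        r⁻¹ * (∫ x_1 in Set.Ioo (-1 : ℝ) 1,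
          (conv (scaleFn f r) (fun y => if 0 ≤ y then (1 : ℝ) else 0) x_1) ^ 2)
        = ∫ s, (Set.Ioo (-(1 / r)) (1 / r)).indicator (fun s => F s * F s) s := by
      intro r hr
      rw [Set.mem_Ioi] at hr
      have h1 : (∫ x_1 in Set.Ioo (-1 : ℝ) 1,
          (conv (scaleFn f r) (fun y => if 0 ≤ y then (1 : ℝ) else 0) x_1) ^ 2)
          = ∫ x_1 in Set.Ioo (-1 : ℝ) 1, (F (x_1 / r)) ^ 2 := by
        refine setIntegral_congr_fun measurableSet_Ioo fun z _ => ?_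
        rw [PCLHelper.conv_heaviside hr]
      rw [h1, ← integral_indicator measurableSet_Ioo]
      have h2 : (Set.Ioo (-1 : ℝ) 1).indicator (fun x_1 => (F (x_1 / r)) ^ 2)
          = fun x_1 => (Set.Ioo (-(1 / r)) (1 / r)).indicator (fun s => F s * F s) (x_1 / r) := by
        funext z
        have hmem : z ∈ Set.Ioo (-1 : ℝ) 1 ↔ z / r ∈ Set.Ioo (-(1 / r)) (1 / r) := by
          simp only [Set.mem_Ioo]
          rw [show -(1 / r) = (-1 : ℝ) / r by ring]
          constructor
          · rintro ⟨h3, h4⟩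
            exact ⟨(div_lt_div_iff_of_pos_right hr).2 h3, (div_lt_div_iff_of_pos_right hr).2 h4⟩
          · rintro ⟨h3, h4⟩
            exact ⟨(div_lt_div_iff_of_pos_right hr).1 h3, (div_lt_div_iff_of_pos_right hr).1 h4⟩
        simp only [Set.indicator_apply]
        by_cases hz : z ∈ Set.Ioo (-1 : ℝ) 1
        · rw [if_pos hz, if_pos (hmem.1 hz), sq]
        · rw [if_neg hz, if_neg fun h => hz (hmem.2 h)]
      rw [h2, MeasureTheory.Measure.integral_comp_div
        (fun s => (Set.Ioo (-(1 / r)) (1 / r)).indicator (fun s => F s * F s) s) r,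
        abs_of_pos hr, smul_eq_mul, inv_mul_cancel_left₀ hr.ne']
    have hdct : Tendsto
        (fun r : ℝ => ∫ s, (Set.Ioo (-(1 / r)) (1 / r)).indicator (fun s => F s * F s) s)
        (𝓝[>] (0 : ℝ)) (𝓝 cF) := by
      have h := MeasureTheory.tendsto_integral_filter_of_dominated_convergence
        (μ := volume) (l := 𝓝[>] (0 : ℝ))
        (F := fun (r : ℝ) (s : ℝ) => (Set.Ioo (-(1 / r)) (1 / r)).indicator (fun s => F s * F s) s)
        (f := fun s => F s * F s) (bound := fun s => |F s| * M)
        (Eventually.of_forall fun r =>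
          ((hFc.mul hFc).aestronglyMeasurable.indicator measurableSet_Ioo))
        (Eventually.of_forall fun r => Eventually.of_forall fun s => by
          refine le_trans (norm_indicator_le_norm_self _ _) ?_
          rw [Real.norm_eq_abs, abs_mul]
          exact mul_le_mul_of_nonneg_left
            (by simpa [Real.norm_eq_abs] using hFb s) (abs_nonneg _))
        (hFi.abs.mul_const M)
        (Eventually.of_forall fun s => by
          refine tendsto_const_nhds.congr' ?_
          have hmem : Set.Ioo (0 : ℝ) (1 / (|s| + 1)) ∈ 𝓝[>] (0 : ℝ) :=
            Ioo_mem_nhdsGT_of_mem ⟨le_rfl, by positivity⟩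
          filter_upwards [hmem] with r hr
          have hr0 : 0 < r := hr.1
          have hlt : |s| + 1 < 1 / r := by
            rw [lt_div_iff₀ hr0]
            have := hr.2
            rw [lt_div_iff₀ (by positivity : (0:ℝ) < |s| + 1)] at this
            linarith [this]
          have hsmem : s ∈ Set.Ioo (-(1 / r)) (1 / r) := by
            constructor
            · nlinarith [neg_abs_le s, abs_nonneg s]
            · nlinarith [le_abs_self s, abs_nonneg s]
          exact (Set.indicator_of_mem hsmem (fun s => F s * F s)).symm)
      exact h
    exact hdct.congr' (by filter_upwards [eventually_mem_nhdsWithin] with r hr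
                          exact (heq r hr).symm)
  have hcc : c = cF := tendsto_nhds_unique hc hident
  -- the main eventual identity
  have hmain : ∀ r ∈ Set.Ioi (0 : ℝ),
      r⁻¹ * ∫ y, (conv (scaleFn f r)
          (fun y => a + ∑ j, d j * (if x j ≤ y then 1 else 0)) y) ^ 2
      = ∑ i, ∑ j, d i * d j * ∫ s, F s * F (s + (x i - x j) / r) := by
    intro r hr
    rw [Set.mem_Ioi] at hr
    have hconv : ∀ y : ℝ, conv (scaleFn f r)
        (fun y => a + ∑ j, d j * (if x j ≤ y then 1 else 0)) y
        = ∑ j, d j * F ((y - x j) / r) :=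
      fun y => PCLHelper.conv_pc hfi hf0 x d a hr y
    have hA : ∀ b : ℝ, Integrable (fun y => F ((y - b) / r)) := fun b => by
      have h1 : Integrable (fun y : ℝ => F (y / r)) := hFi.comp_div hr.ne'
      exact h1.comp_sub_right b
    have hAb : ∀ (b : ℝ) (y : ℝ), ‖F ((y - b) / r)‖ ≤ M := fun b y => hFb _
    have hABint : ∀ i j : Fin N, Integrable
        (fun y => F ((y - x i) / r) * F ((y - x j) / r)) := fun i j =>
      (hA (x j)).bdd_mul ((hFc.comp (by fun_prop)).aestronglyMeasurable)
        (Eventually.of_forall fun y => hAb (x i) y)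
    have hterm : ∀ i j : Fin N, Integrable
        (fun y => (d i * F ((y - x i) / r)) * (d j * F ((y - x j) / r))) := fun i j => by
      have heq : (fun y => (d i * F ((y - x i) / r)) * (d j * F ((y - x j) / r)))
          = fun y => (d i * d j) * (F ((y - x i) / r) * F ((y - x j) / r)) :=
        funext fun y => by ring
      rw [heq]
      exact (hABint i j).const_mul _
    have hsq : (fun y => (conv (scaleFn f r)
          (fun y => a + ∑ j, d j * (if x j ≤ y then 1 else 0)) y) ^ 2)
        = fun y => ∑ i, ∑ j, (d i * F ((y - x i) / r)) * (d j * F ((y - x j) / r)) := by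
      funext y
      rw [hconv y, sq, Finset.sum_mul_sum]
    rw [hsq]
    rw [integral_finset_sum _ fun i _ => integrable_finset_sum _ fun j _ => hterm i j]
    have hIJ : ∀ i j : Fin N,
        (∫ y, (d i * F ((y - x i) / r)) * (d j * F ((y - x j) / r)))
        = d i * d j * (r * ∫ s, F s * F (s + (x i - x j) / r)) := by
      intro i j
      have heq : (fun y => (d i * F ((y - x i) / r)) * (d j * F ((y - x j) / r)))
          = fun y => (d i * d j) * (F ((y - x i) / r) * F ((y - x j) / r)) :=
        funext fun y => by ring
      rw [heq, integral_const_mul]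
      congr 1
      have h1 := MeasureTheory.integral_add_right_eq_self (μ := volume)
        (fun y => F ((y - x i) / r) * F ((y - x j) / r)) (x i)
      have h2 : (fun y => F ((y + x i - x i) / r) * F ((y + x i - x j) / r))
          = fun y => (fun s => F s * F (s + (x i - x j) / r)) (y / r) := by
        funext y
        have e1 : (y + x i - x i) / r = y / r := by ring_nf
        have e2 : (y + x i - x j) / r = y / r + (x i - x j) / r := by ring
        simp only [e1, e2]
      rw [h2] at h1
      rw [← h1, MeasureTheory.Measure.integral_comp_div
        (fun s => F s * F (s + (x i - x j) / r)) r, abs_of_pos hr, smul_eq_mul]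
    rw [Finset.mul_sum]
    refine Finset.sum_congr rfl fun i _ => ?_
    rw [integral_finset_sum _ fun j _ => hterm i j, Finset.mul_sum]
    refine Finset.sum_congr rfl fun j _ => ?_
    rw [hIJ i j]
    field_simp
  -- the limit of the double sum
  have hlim : Tendsto
      (fun r : ℝ => ∑ i, ∑ j, d i * d j * ∫ s, F s * F (s + (x i - x j) / r))
      (𝓝[>] (0 : ℝ)) (𝓝 (∑ i, d i ^ 2 * cF)) := by
    refine tendsto_finset_sum _ fun i _ => ?_
    have h : Tendsto (fun r : ℝ => ∑ j, d i * d j * ∫ s, F s * F (s + (x i - x j) / r))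
        (𝓝[>] (0 : ℝ)) (𝓝 (∑ j, if j = i then d i ^ 2 * cF else 0)) := by
      refine tendsto_finset_sum _ fun j _ => ?_
      by_cases hij : j = i
      · subst hij
        rw [if_pos rfl]
        have : (fun r : ℝ => d j * d j * ∫ s, F s * F (s + (x j - x j) / r))
            = fun _ : ℝ => d j ^ 2 * cF := by
          funext r
          rw [sub_self, zero_div]
          simp [sq, hcF]
        rw [this]
        exact tendsto_const_nhds
      · rw [if_neg hij]
        have hΔ : x i - x j ≠ 0 := sub_ne_zero.2 fun h => hij (hx h).symm
        have := (hcross (x i - x j) hΔ).const_mul (d i * d j)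
        simpa using this
    simpa [Finset.sum_ite_eq', Finset.mem_univ] using h
  have hfinal : c * ∑ j, d j ^ 2 = ∑ i, d i ^ 2 * cF := by
    rw [hcc, Finset.mul_sum]
    exact Finset.sum_congr rfl fun i _ => mul_comm _ _
  rw [hfinal]
  refine hlim.congr' ?_
  filter_upwards [eventually_mem_nhdsWithin] with r hr
  exact (hmain r hr).symm
end
end

section
/- Let f be a smooth function on R with ∫ f = 0 and ∫ |x| |f(x)| dx < ∞, and let c_f = lim_{r→0⁺} (1/r) ‖f_r ∗ H‖_{L^2((−1,1))}^2, where H is the Heaviside function. Then for every u ∈ BV(R), lim_{r→0⁺} (1/r) ‖f_r ∗ u‖_{L^2(R)}^2 = c_f ∑_{x ∈ J_u} |u⁺(x) − u⁻(x)|^2. -/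
open MeasureTheory Filter Topology Real
open scoped FourierTransform RealInnerProductSpace ENNReal

noncomputable section

variable {V : Type*} [NormedAddCommGroup V] [InnerProductSpace ℝ V]
  [FiniteDimensional ℝ V] [MeasurableSpace V] [BorelSpace V] [MeasureSpace V]

namespace BBM1D
open Set Function
open scoped Pointwise

/-- primitive of `f` -/
def FF (f : ℝ → ℝ) (x : ℝ) : ℝ := ∫ t in Set.Iic x, f t
/-- autocorrelation of `FF f` -/
def GG (f : ℝ → ℝ) (a : ℝ) : ℝ := ∫ x, FF f x * FF f (x - a)
/-- the constant `∫ F²` -/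
def CF (f : ℝ → ℝ) : ℝ := ∫ x, (FF f x) ^ 2
/-- convolution of the rescaled primitive against a measure -/
def AA (f : ℝ → ℝ) (μ : Measure ℝ) (r x : ℝ) : ℝ := ∫ t, FF f (r⁻¹ * (x - t)) ∂μ

variable {f : ℝ → ℝ}

lemma FF_eq_indicator (x : ℝ) : FF f x = ∫ t, Set.indicator (Set.Iic x) f t := by
  rw [FF, integral_indicator measurableSet_Iic]

lemma abs_FF_le (hfi : Integrable f) (x : ℝ) : |FF f x| ≤ ∫ t, |f t| := by
  calc |FF f x| ≤ ∫ t in Set.Iic x, |f t| := by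
        simpa [FF, Real.norm_eq_abs] using
          norm_integral_le_integral_norm (μ := volume.restrict (Set.Iic x)) f
    _ ≤ ∫ t, |f t| := setIntegral_le_integral hfi.abs (Eventually.of_forall fun t => abs_nonneg _)

lemma FF_continuous (hfi : Integrable f) : Continuous (FF f) := by
  rw [continuous_iff_continuousAt]
  intro x₀
  simp only [funext fun x => FF_eq_indicator (f := f) x]
  apply continuousAt_of_dominated (bound := fun t => |f t|)
  · exact Eventually.of_forall fun x =>
      (hfi.aestronglyMeasurable.indicator measurableSet_Iic)
  · exact Eventually.of_forall fun x => Eventually.of_forall fun t => by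
      rw [Real.norm_eq_abs]
      rcases Set.indicator_eq_zero_or_self (Set.Iic x) f t with h | h <;> simp [h, abs_nonneg]
  · exact hfi.abs
  · filter_upwards [compl_mem_ae_iff.2 (measure_singleton x₀)] with t ht
    have ht' : t ≠ x₀ := by simpa [Set.mem_singleton_iff] using ht
    rcases lt_or_gt_of_ne ht' with h | h
    · have : ∀ᶠ x in 𝓝 x₀, Set.indicator (Set.Iic x) f t = f t := by
        filter_upwards [eventually_gt_nhds h] with x hx
        simp [Set.indicator_of_mem, hx.le]
      exact continuousAt_const.congr (this.mono fun x hx => hx.symm)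
    · have : ∀ᶠ x in 𝓝 x₀, Set.indicator (Set.Iic x) f t = 0 := by
        filter_upwards [eventually_lt_nhds h] with x hx
        simp [Set.indicator_of_notMem, not_le.2 hx]
      exact continuousAt_const.congr (this.mono fun x hx => hx.symm)

lemma FF_tendsto_atTop (hfi : Integrable f) :
    Tendsto (FF f) atTop (𝓝 (∫ t, f t)) := by
  simp only [funext fun x => FF_eq_indicator (f := f) x]
  apply tendsto_integral_filter_of_dominated_convergence (bound := fun t => |f t|)
  · exact Eventually.of_forall fun x =>
      (hfi.aestronglyMeasurable.indicator measurableSet_Iic)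
  · exact Eventually.of_forall fun x => Eventually.of_forall fun t => by
      rw [Real.norm_eq_abs]
      rcases Set.indicator_eq_zero_or_self (Set.Iic x) f t with h | h <;> simp [h, abs_nonneg]
  · exact hfi.abs
  · refine Eventually.of_forall fun t => ?_
    apply Tendsto.congr' _ (tendsto_const_nhds (x := f t))
    filter_upwards [eventually_ge_atTop t] with x hx
    simp [Set.indicator_of_mem, hx]

lemma FF_tendsto_atBot (hfi : Integrable f) :
    Tendsto (FF f) atBot (𝓝 0) := by
  have : (0 : ℝ) = ∫ (_ : ℝ), (0 : ℝ) := by simp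
  rw [this]
  simp only [funext fun x => FF_eq_indicator (f := f) x]
  apply tendsto_integral_filter_of_dominated_convergence (bound := fun t => |f t|)
  · exact Eventually.of_forall fun x =>
      (hfi.aestronglyMeasurable.indicator measurableSet_Iic)
  · exact Eventually.of_forall fun x => Eventually.of_forall fun t => by
      rw [Real.norm_eq_abs]
      rcases Set.indicator_eq_zero_or_self (Set.Iic x) f t with h | h <;> simp [h, abs_nonneg]
  · exact hfi.abs
  · refine Eventually.of_forall fun t => ?_
    apply Tendsto.congr' _ (tendsto_const_nhds (x := (0:ℝ)))
    filter_upwards [eventually_lt_atBot t] with x hx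
    simp [Set.indicator_of_notMem, not_le.2 hx]

lemma abs_FF_le_left (hfi : Integrable f) (x : ℝ) :
    |FF f x| ≤ ∫ t in Set.Iic x, |f t| := by
  simpa [FF, Real.norm_eq_abs] using
    norm_integral_le_integral_norm (μ := volume.restrict (Set.Iic x)) f

lemma FF_eq_neg_right (hfi : Integrable f) (hf0 : (∫ x, f x) = 0) (x : ℝ) :
    FF f x = -∫ t in Set.Ioi x, f t := by
  have h := intervalIntegral.integral_Iic_add_Ioi (b := x) (f := f) (μ := volume)
    hfi.integrableOn hfi.integrableOn
  rw [hf0] at h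
  rw [FF]; linarith

lemma FF_integrable (hfc : Continuous f) (hfi : Integrable f) (hf0 : (∫ x, f x) = 0)
    (hfd : Integrable fun x : ℝ => |x| * |f x|) : Integrable (FF f) := by
  classical
  -- the region E and the dominating kernel
  set E : Set (ℝ × ℝ) := {p | (p.1 ≤ 0 ∧ p.2 ≤ p.1) ∨ (0 < p.1 ∧ p.1 < p.2)} with hE
  have hEm : MeasurableSet E := by
    apply MeasurableSet.union
    · exact ((measurableSet_le measurable_fst measurable_const).inter
        (measurableSet_le measurable_snd measurable_fst))
    · exact ((measurableSet_lt measurable_const measurable_fst).inter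
        (measurableSet_lt measurable_fst measurable_snd))
  set e : ℝ × ℝ → ℝ≥0∞ := E.indicator (fun p => ENNReal.ofReal |f p.2|) with he
  have hem : Measurable e :=
    Measurable.indicator ((hfc.measurable.comp measurable_snd).abs.ennreal_ofReal) hEm
  -- FF is continuous hence ae strongly measurable; remains finite integral
  refine ⟨?_, ?_⟩
  · -- continuity of FF: primitive of integrable function
    exact Continuous.aestronglyMeasurable (by
      have : Continuous fun x : ℝ => ∫ t in Set.Iic x, f t := by
        -- use interval integral primitive continuity
        have h0 : ∀ x : ℝ, (∫ t in Set.Iic x, f t) =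
            (∫ t in Set.Iic 0, f t) + ∫ t in (0:ℝ)..x, f t := by
          intro x
          rw [← intervalIntegral.integral_Iic_sub_Iic hfi.integrableOn hfi.integrableOn]
          ring
        simp only [funext h0]
        exact continuous_const.add (intervalIntegral.continuous_primitive
          (fun a b => hfi.intervalIntegrable) 0)
      exact this)
  · rw [HasFiniteIntegral]
    -- pointwise bound
    have key : ∀ x : ℝ, (‖FF f x‖₊ : ℝ≥0∞) ≤ ∫⁻ t, e (x, t) := by
      intro x
      have hind : ∀ t, e (x, t) =
          (if x ≤ 0 then Set.Iic x else Set.Ioi x).indicator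
            (fun t => ENNReal.ofReal |f t|) t := by
        intro t
        by_cases hx : x ≤ 0
        · rw [if_pos hx]
          simp only [he, hE, Set.indicator_apply, Set.mem_setOf_eq, Set.mem_Iic]
          congr 1
          simp only [eq_iff_iff]
          constructor
          · rintro (⟨h1, h2⟩ | ⟨h1, h2⟩)
            · exact h2
            · exfalso; linarith
          · intro h; exact Or.inl ⟨hx, h⟩
        · rw [if_neg hx]
          simp only [he, hE, Set.indicator_apply, Set.mem_setOf_eq, Set.mem_Ioi]
          congr 1
          simp only [eq_iff_iff]
          constructor
          · rintro (⟨h1, h2⟩ | ⟨h1, h2⟩)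
            · exfalso; exact hx h1
            · exact h2
          · intro h; exact Or.inr ⟨by linarith, h⟩
      calc (‖FF f x‖₊ : ℝ≥0∞) = ENNReal.ofReal |FF f x| := Real.enorm_eq_ofReal_abs _
        _ ≤ ∫⁻ t, e (x, t) := by
          rw [lintegral_congr hind, lintegral_indicator (by
            by_cases hx : x ≤ 0 <;> simp [hx, measurableSet_Iic, measurableSet_Ioi])]
          by_cases hx : x ≤ 0
          · simp only [hx, if_true]
            calc ENNReal.ofReal |FF f x| ≤ ENNReal.ofReal (∫ t in Set.Iic x, |f t|) :=
                ENNReal.ofReal_le_ofReal (abs_FF_le_left hfi x)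
              _ = ∫⁻ t in Set.Iic x, ENNReal.ofReal |f t| :=
                ofReal_integral_eq_lintegral_ofReal hfi.abs.integrableOn
                  (Eventually.of_forall fun t => abs_nonneg _)
          · simp only [hx, if_false]
            have : |FF f x| ≤ ∫ t in Set.Ioi x, |f t| := by
              rw [FF_eq_neg_right hfi hf0 x, abs_neg]
              simpa [Real.norm_eq_abs] using
                norm_integral_le_integral_norm (μ := volume.restrict (Set.Ioi x)) f
            calc ENNReal.ofReal |FF f x| ≤ ENNReal.ofReal (∫ t in Set.Ioi x, |f t|) :=
                ENNReal.ofReal_le_ofReal this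
              _ = ∫⁻ t in Set.Ioi x, ENNReal.ofReal |f t| :=
                ofReal_integral_eq_lintegral_ofReal hfi.abs.integrableOn
                  (Eventually.of_forall fun t => abs_nonneg _)
    calc ∫⁻ x, (‖FF f x‖₊ : ℝ≥0∞) ≤ ∫⁻ x, ∫⁻ t, e (x, t) := lintegral_mono key
      _ = ∫⁻ t, ∫⁻ x, e (x, t) := lintegral_lintegral_swap hem.aemeasurable
      _ = ∫⁻ t, ENNReal.ofReal (|t| * |f t|) := by
        apply lintegral_congr
        intro t
        have hx : ∀ x, e (x, t) =
            (Set.Icc t 0 ∪ Set.Ioo 0 t).indicator (fun _ => ENNReal.ofReal |f t|) x := by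
          intro x
          simp only [he, hE, Set.indicator_apply, Set.mem_setOf_eq, Set.mem_union, Set.mem_Icc,
            Set.mem_Ioo]
          congr 1
          simp only [eq_iff_iff]
          tauto
        rw [lintegral_congr hx, lintegral_indicator
          (measurableSet_Icc.union measurableSet_Ioo), setLIntegral_const]
        have hdisj : Disjoint (Set.Icc t 0) (Set.Ioo 0 t) := by
          apply Set.disjoint_left.2
          rintro x ⟨_, h2⟩ ⟨h3, _⟩; linarith
        rw [measure_union hdisj measurableSet_Ioo, Real.volume_Icc, Real.volume_Ioo]
        have : ENNReal.ofReal (0 - t) + ENNReal.ofReal (t - 0) = ENNReal.ofReal |t| := by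
          rcases le_total t 0 with h | h
          · rw [show ENNReal.ofReal (t - 0) = 0 from ENNReal.ofReal_eq_zero.2 (by linarith),
              add_zero, abs_of_nonpos h]
            norm_num
          · rw [show ENNReal.ofReal (0 - t) = 0 from ENNReal.ofReal_eq_zero.2 (by linarith),
              zero_add, abs_of_nonneg h]
            norm_num
        rw [this, ← ENNReal.ofReal_mul (abs_nonneg _), mul_comm |f t| |t|]
      _ < ⊤ := by
        rw [← ofReal_integral_eq_lintegral_ofReal hfd
          (Eventually.of_forall fun t => mul_nonneg (abs_nonneg _) (abs_nonneg _))]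
        exact ENNReal.ofReal_lt_top

section Gpart
variable (hfc : Continuous f) (hfi : Integrable f) (hf0 : (∫ x, f x) = 0)
    (hfd : Integrable fun x : ℝ => |x| * |f x|)
include hfc hfi hf0 hfd

lemma FF_sq_integrable : Integrable (fun x => FF f x ^ 2) := by
  have h := (FF_integrable hfc hfi hf0 hfd)
  have : (fun x => FF f x ^ 2) = fun x => FF f x * FF f x := by ext x; ring
  rw [this]
  exact h.bdd_mul (c := ∫ t, |f t|) (FF_continuous hfi).aestronglyMeasurable
    (Eventually.of_forall fun x => by simpa [Real.norm_eq_abs] using abs_FF_le hfi x)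

lemma FF_shift_sq_integrable (a : ℝ) : Integrable (fun x => FF f x ^ 2)  := FF_sq_integrable hfc hfi hf0 hfd

lemma integral_FF_shift_sq (a : ℝ) : ∫ x, FF f (x - a) ^ 2 = CF f := by
  rw [CF]
  exact integral_sub_right_eq_self (fun x => FF f x ^ 2) a

lemma integrable_FF_mul_shift (a : ℝ) : Integrable (fun x => FF f x * FF f (x - a)) := by
  have h := (FF_integrable hfc hfi hf0 hfd)
  have h2 : Integrable (fun x => FF f (x - a) * FF f x) :=
    h.bdd_mul (c := ∫ t, |f t|) (((FF_continuous hfi).comp (continuous_id.sub continuous_const)).aestronglyMeasurable)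
      (Eventually.of_forall fun x => by simpa [Real.norm_eq_abs] using abs_FF_le hfi (x - a))
  simpa [mul_comm] using h2

lemma CF_nonneg : 0 ≤ CF f := integral_nonneg fun x => sq_nonneg _

lemma abs_GG_le (a : ℝ) : |GG f a| ≤ CF f := by
  have hint := integrable_FF_mul_shift hfc hfi hf0 hfd a
  have hsq := FF_sq_integrable hfc hfi hf0 hfd
  have hsq2 : Integrable (fun x => FF f (x - a) ^ 2) := hsq.comp_sub_right a
  calc |GG f a| ≤ ∫ x, |FF f x * FF f (x - a)| := by
        rw [GG]
        simpa [Real.norm_eq_abs, abs_mul] using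
          norm_integral_le_integral_norm (μ := volume) (fun x => FF f x * FF f (x - a))
    _ = ∫ x, |FF f x| * |FF f (x - a)| := by simp [abs_mul]
    _ ≤ ∫ x, (FF f x ^ 2 + FF f (x - a) ^ 2) / 2 := by
        apply integral_mono (by simpa [abs_mul] using hint.abs) ((hsq.add hsq2).div_const 2)
        intro x
        simp only [Pi.add_apply]
        nlinarith [sq_nonneg (|FF f x| - |FF f (x - a)|), sq_abs (FF f x),
          sq_abs (FF f (x - a)), abs_nonneg (FF f x), abs_nonneg (FF f (x - a))]
    _ = CF f := by
        rw [integral_div, integral_add hsq hsq2, integral_FF_shift_sq hfc hfi hf0 hfd a, CF]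
        ring

lemma GG_continuous : Continuous (GG f) := by
  rw [continuous_iff_continuousAt]
  intro a₀
  apply continuousAt_of_dominated (bound := fun x => (∫ t, |f t|) * |FF f x|)
  · exact Eventually.of_forall fun a => (integrable_FF_mul_shift hfc hfi hf0 hfd a).aestronglyMeasurable
  · refine Eventually.of_forall fun a => Eventually.of_forall fun x => ?_
    rw [Real.norm_eq_abs, abs_mul, mul_comm]
    exact mul_le_mul_of_nonneg_right (abs_FF_le hfi (x - a)) (abs_nonneg _)
  · exact ((FF_integrable hfc hfi hf0 hfd).abs.const_mul _)
  · refine Eventually.of_forall fun x => ?_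
    exact (continuous_const.mul ((FF_continuous hfi).comp
      (continuous_const.sub continuous_id))).continuousAt

lemma GG_tendsto_atTop : Tendsto (GG f) atTop (𝓝 0) := by
  have h0 : (0 : ℝ) = ∫ (_ : ℝ), (0:ℝ) := by simp
  rw [h0]
  apply tendsto_integral_filter_of_dominated_convergence
      (bound := fun x => (∫ t, |f t|) * |FF f x|)
  · exact Eventually.of_forall fun a => (integrable_FF_mul_shift hfc hfi hf0 hfd a).aestronglyMeasurable
  · refine Eventually.of_forall fun a => Eventually.of_forall fun x => ?_
    rw [Real.norm_eq_abs, abs_mul, mul_comm]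
    exact mul_le_mul_of_nonneg_right (abs_FF_le hfi (x - a)) (abs_nonneg _)
  · exact ((FF_integrable hfc hfi hf0 hfd).abs.const_mul _)
  · refine Eventually.of_forall fun x => ?_
    have h1 : Tendsto (fun a : ℝ => x - a) atTop atBot := by
      have := tendsto_atBot_add_const_right atTop x tendsto_neg_atTop_atBot
      simpa [sub_eq_neg_add] using this
    have h2 : Tendsto (fun a : ℝ => FF f (x - a)) atTop (𝓝 0) :=
      (FF_tendsto_atBot hfi).comp h1
    simpa using tendsto_const_nhds.mul h2

lemma GG_tendsto_atBot : Tendsto (GG f) atBot (𝓝 0) := by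
  have h0 : (0 : ℝ) = ∫ (_ : ℝ), (0:ℝ) := by simp
  rw [h0]
  apply tendsto_integral_filter_of_dominated_convergence
      (bound := fun x => (∫ t, |f t|) * |FF f x|)
  · exact Eventually.of_forall fun a => (integrable_FF_mul_shift hfc hfi hf0 hfd a).aestronglyMeasurable
  · refine Eventually.of_forall fun a => Eventually.of_forall fun x => ?_
    rw [Real.norm_eq_abs, abs_mul, mul_comm]
    exact mul_le_mul_of_nonneg_right (abs_FF_le hfi (x - a)) (abs_nonneg _)
  · exact ((FF_integrable hfc hfi hf0 hfd).abs.const_mul _)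
  · refine Eventually.of_forall fun x => ?_
    have h1 : Tendsto (fun a : ℝ => x - a) atBot atTop := by
      have := tendsto_atTop_add_const_right atBot x tendsto_neg_atBot_atTop
      simpa [sub_eq_neg_add] using this
    have h2 : Tendsto (fun a : ℝ => FF f (x - a)) atBot (𝓝 0) := by
      have := (FF_tendsto_atTop hfi).comp h1
      rwa [hf0] at this
    simpa using tendsto_const_nhds.mul h2

omit hfc hfi hf0 hfd in
lemma GG_zero : GG f 0 = CF f := by
  rw [GG, CF]
  congr 1; ext x; rw [sub_zero]; ring

omit hfc hfi hf0 hfd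

lemma conv_def (g h : ℝ → ℝ) (x : ℝ) : conv g h x = ∫ y, g y * h (x - y) := rfl

lemma scaleFn_apply (r x : ℝ) : scaleFn f r x = r⁻¹ * f (r⁻¹ * x) := by
  simp [scaleFn, Module.finrank_self, smul_eq_mul]

lemma scale_integrable (hfi : Integrable f) {r : ℝ} (hr : r ≠ 0) :
    Integrable (scaleFn f r) := by
  have : Integrable fun x => r⁻¹ * f (r⁻¹ * x) :=
    (hfi.comp_mul_left' (inv_ne_zero hr)).const_mul _
  exact this.congr (Eventually.of_forall fun x => (scaleFn_apply r x).symm)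

lemma integral_scale (hf0 : (∫ x, f x) = 0) (r : ℝ) :
    ∫ x, scaleFn f r x = 0 := by
  simp only [funext fun x => scaleFn_apply (f := f) r x]
  rw [MeasureTheory.integral_const_mul, Measure.integral_comp_inv_mul_left f r, hf0]
  simp

lemma setIntegral_scale_Iic {r : ℝ} (hr : 0 < r) (z : ℝ) :
    ∫ y in Set.Iic z, scaleFn f r y = FF f (r⁻¹ * z) := by
  simp only [funext fun x => scaleFn_apply (f := f) r x]
  rw [MeasureTheory.integral_const_mul]
  have h1 : ∫ y in Set.Iic z, f (r⁻¹ * y) = ∫ y in Set.Iic z, f (r⁻¹ • y) := by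
    simp [smul_eq_mul]
  rw [h1, Measure.setIntegral_comp_smul_of_pos volume f (Set.Iic z) (inv_pos.2 hr)]
  have h2 : r⁻¹ • Set.Iic z = Set.Iic (r⁻¹ * z) := by
    rw [LinearOrderedField.smul_Iic (inv_pos.2 hr)]
  rw [h2, Module.finrank_self, pow_one, inv_inv, smul_eq_mul, FF]
  field_simp

lemma conv_scale_heaviside {r : ℝ} (hr : 0 < r) (x : ℝ) :
    conv (scaleFn f r) (fun y => if 0 ≤ y then (1:ℝ) else 0) x = FF f (r⁻¹ * x) := by
  rw [conv_def]
  have h1 : ∀ y, scaleFn f r y * (if 0 ≤ x - y then (1:ℝ) else 0)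
      = Set.indicator (Set.Iic x) (scaleFn f r) y := by
    intro y
    by_cases h : y ≤ x
    · rw [if_pos (by linarith), Set.indicator_of_mem (Set.mem_Iic.2 h)]; ring
    · rw [if_neg (by intro hh; exact h (by linarith)), Set.indicator_of_notMem (by simpa using h)]
      ring
  rw [integral_congr_ae (Eventually.of_forall h1), integral_indicator measurableSet_Iic,
    setIntegral_scale_Iic hr x]

lemma tendsto_heaviside (hfc : Continuous f) (hfi : Integrable f) (hf0 : (∫ x, f x) = 0)
    (hfd : Integrable fun x : ℝ => |x| * |f x|) :
    Tendsto (fun r : ℝ => r⁻¹ * ∫ x in Set.Ioo (-1:ℝ) 1, (FF f (r⁻¹ * x)) ^ 2)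
      (𝓝[>] (0:ℝ)) (𝓝 (CF f)) := by
  have hFsq := FF_sq_integrable hfc hfi hf0 hfd
  have key : Tendsto (fun r : ℝ => ∫ x, (Set.Ioo (-r⁻¹) r⁻¹).indicator (fun x => FF f x ^ 2) x)
      (𝓝[>] (0:ℝ)) (𝓝 (CF f)) := by
    rw [show CF f = ∫ x, FF f x ^ 2 from rfl]
    apply tendsto_integral_filter_of_dominated_convergence (bound := fun x => FF f x ^ 2)
    · exact Eventually.of_forall fun r =>
        hFsq.aestronglyMeasurable.indicator measurableSet_Ioo
    · refine Eventually.of_forall fun r => Eventually.of_forall fun x => ?_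
      rw [Real.norm_eq_abs]
      rcases Set.indicator_eq_zero_or_self (Set.Ioo (-r⁻¹) r⁻¹) (fun x => FF f x ^ 2) x
        with h | h <;> rw [h] <;> simp [abs_of_nonneg (sq_nonneg (FF f x)), sq_nonneg]
    · exact hFsq
    · refine Eventually.of_forall fun x => ?_
      apply Tendsto.congr' _ (tendsto_const_nhds (x := FF f x ^ 2))
      have hmem : Set.Ioo (0:ℝ) ((|x|+1)⁻¹) ∈ 𝓝[>] (0:ℝ) :=
        Ioo_mem_nhdsGT_of_mem ⟨le_rfl, by positivity⟩
      filter_upwards [hmem] with r hr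
      have hrpos : 0 < r := hr.1
      have hx : |x| < r⁻¹ := by
        rw [inv_eq_one_div, lt_div_iff₀ hrpos]
        have h2 : r * (|x| + 1) < 1 := by
          have h3 := hr.2
          rw [inv_eq_one_div, lt_div_iff₀ (by positivity : (0:ℝ) < |x| + 1)] at h3
          linarith
        nlinarith [abs_nonneg x]
      have : x ∈ Set.Ioo (-r⁻¹) r⁻¹ := by
        rcases abs_lt.1 hx with ⟨h1, h2⟩
        exact ⟨h1, h2⟩
      rw [Set.indicator_of_mem this]
  apply key.congr'
  filter_upwards [self_mem_nhdsWithin] with r hr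
  have hrpos : (0:ℝ) < r := hr
  have h1 : ∫ x in Set.Ioo (-1:ℝ) 1, (FF f (r⁻¹ * x)) ^ 2
      = r * ∫ x in Set.Ioo (-r⁻¹) r⁻¹, FF f x ^ 2 := by
    have : ∀ x : ℝ, (FF f (r⁻¹ * x)) ^ 2 = (fun w => FF f w ^ 2) (r⁻¹ • x) := by
      intro x; simp [smul_eq_mul]
    rw [integral_congr_ae (Eventually.of_forall fun x => by
      rw [this x] : ∀ᵐ x ∂(volume.restrict (Set.Ioo (-1:ℝ) 1)), _)]
    rw [Measure.setIntegral_comp_smul_of_pos volume (fun w => FF f w ^ 2)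
      (Set.Ioo (-1:ℝ) 1) (inv_pos.2 hrpos)]
    rw [LinearOrderedField.smul_Ioo (inv_pos.2 hrpos), Module.finrank_self, pow_one, inv_inv,
      smul_eq_mul]
    norm_num
  rw [integral_indicator measurableSet_Ioo, h1]
  field_simp

end Gpart
section Kernel
variable (hfc : Continuous f) (hfi : Integrable f) (hf0 : (∫ x, f x) = 0)
    (hfd : Integrable fun x : ℝ => |x| * |f x|)
    (μ ν : Measure ℝ) [IsFiniteMeasure μ] [IsFiniteMeasure ν]
include hfc hfi hf0 hfd

-- integrability of a dilated-translated square
lemma FF_aff_sq_integrable {r : ℝ} (hr : r ≠ 0) (t : ℝ) :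
    Integrable (fun x => FF f (r⁻¹ * (x - t)) ^ 2) := by
  have h1 : Integrable (fun x => FF f (r⁻¹ * x) ^ 2) :=
    (FF_sq_integrable hfc hfi hf0 hfd).comp_mul_left' (inv_ne_zero hr)
  exact h1.comp_sub_right t

lemma integral_FF_aff_sq {r : ℝ} (hr : 0 < r) (t : ℝ) :
    ∫ x, FF f (r⁻¹ * (x - t)) ^ 2 = r * CF f := by
  have h1 : ∫ x, FF f (r⁻¹ * (x - t)) ^ 2 = ∫ x, FF f (r⁻¹ * x) ^ 2 :=
    integral_sub_right_eq_self (fun x => FF f (r⁻¹ * x) ^ 2) t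
  rw [h1, Measure.integral_comp_inv_mul_left (fun y => FF f y ^ 2) r, abs_of_pos hr,
    smul_eq_mul, CF]

-- the big product-integrability lemma
lemma kernel_integrable {r : ℝ} (hr : 0 < r) :
    Integrable (fun w : ℝ × (ℝ × ℝ) =>
      FF f (r⁻¹ * (w.1 - w.2.1)) * FF f (r⁻¹ * (w.1 - w.2.2))) (volume.prod (μ.prod ν)) := by
  have hFc := FF_continuous hfi
  have c1 : Continuous fun w : ℝ × (ℝ × ℝ) => r⁻¹ * (w.1 - w.2.1) := by fun_prop
  have c2 : Continuous fun w : ℝ × (ℝ × ℝ) => r⁻¹ * (w.1 - w.2.2) := by fun_prop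
  have hcont : Continuous (fun w : ℝ × (ℝ × ℝ) =>
      FF f (r⁻¹ * (w.1 - w.2.1)) * FF f (r⁻¹ * (w.1 - w.2.2))) :=
    (hFc.comp c1).mul (hFc.comp c2)
  have hAESM := hcont.aestronglyMeasurable (μ := volume.prod (μ.prod ν))
  refine (integrable_prod_iff' hAESM).2 ⟨?_, ?_⟩
  · refine Eventually.of_forall fun z => ?_
    have h1 := FF_aff_sq_integrable hfc hfi hf0 hfd hr.ne' z.1
    have h2 := FF_aff_sq_integrable hfc hfi hf0 hfd hr.ne' z.2
    apply Integrable.mono' ((h1.add h2).div_const 2)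
    · exact Continuous.aestronglyMeasurable <|
        ((hFc.comp (by fun_prop : Continuous fun x : ℝ => r⁻¹ * (x - z.1))).mul
          (hFc.comp (by fun_prop : Continuous fun x : ℝ => r⁻¹ * (x - z.2))))
    · refine Eventually.of_forall fun x => ?_
      rw [Real.norm_eq_abs, abs_mul, Pi.add_apply]
      set A := FF f (r⁻¹ * (x - z.1)); set B := FF f (r⁻¹ * (x - z.2))
      nlinarith [sq_nonneg (|A| - |B|), sq_abs A, sq_abs B, abs_nonneg A, abs_nonneg B]
  · apply Integrable.mono' (integrable_const (r * CF f))
    · exact (hcont.stronglyMeasurable.norm.integral_prod_left').aestronglyMeasurable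
    · refine Eventually.of_forall fun z => ?_
      have hnonneg : 0 ≤ ∫ x, ‖FF f (r⁻¹ * (x - z.1)) * FF f (r⁻¹ * (x - z.2))‖ :=
        integral_nonneg fun x => norm_nonneg _
      rw [Real.norm_eq_abs, abs_of_nonneg hnonneg]
      have h1 := FF_aff_sq_integrable hfc hfi hf0 hfd hr.ne' z.1
      have h2 := FF_aff_sq_integrable hfc hfi hf0 hfd hr.ne' z.2
      have habs : Integrable (fun x =>
          ‖FF f (r⁻¹ * (x - z.1)) * FF f (r⁻¹ * (x - z.2))‖) := by
        apply Integrable.norm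
        apply Integrable.mono' ((h1.add h2).div_const 2)
        · exact Continuous.aestronglyMeasurable <|
            ((hFc.comp (by fun_prop : Continuous fun x : ℝ => r⁻¹ * (x - z.1))).mul
              (hFc.comp (by fun_prop : Continuous fun x : ℝ => r⁻¹ * (x - z.2))))
        · refine Eventually.of_forall fun x => ?_
          rw [Real.norm_eq_abs, abs_mul, Pi.add_apply]
          set A := FF f (r⁻¹ * (x - z.1)); set B := FF f (r⁻¹ * (x - z.2))
          nlinarith [sq_nonneg (|A| - |B|), sq_abs A, sq_abs B, abs_nonneg A, abs_nonneg B]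
      calc ∫ x, ‖FF f (r⁻¹ * (x - z.1)) * FF f (r⁻¹ * (x - z.2))‖
          ≤ ∫ x, (FF f (r⁻¹ * (x - z.1)) ^ 2 + FF f (r⁻¹ * (x - z.2)) ^ 2) / 2 := by
            apply integral_mono habs ((h1.add h2).div_const 2)
            intro x
            dsimp only [Pi.add_apply]
            rw [Real.norm_eq_abs, abs_mul]
            set A := FF f (r⁻¹ * (x - z.1)); set B := FF f (r⁻¹ * (x - z.2))
            nlinarith [sq_nonneg (|A| - |B|), sq_abs A, sq_abs B, abs_nonneg A, abs_nonneg B]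
        _ = r * CF f := by
            rw [integral_div, integral_add h1 h2,
              integral_FF_aff_sq hfc hfi hf0 hfd hr z.1,
              integral_FF_aff_sq hfc hfi hf0 hfd hr z.2]
            ring

lemma AA_eq_prod_integral {r : ℝ} (x : ℝ) :
    AA f μ r x * AA f ν r x
      = ∫ z : ℝ × ℝ, FF f (r⁻¹ * (x - z.1)) * FF f (r⁻¹ * (x - z.2)) ∂(μ.prod ν) := by
  rw [AA, AA, ← integral_prod_mul (μ := μ) (ν := ν) (fun t => FF f (r⁻¹ * (x - t)))
    (fun s => FF f (r⁻¹ * (x - s)))]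

lemma AA_mul_integrable {r : ℝ} (hr : 0 < r) :
    Integrable (fun x => AA f μ r x * AA f ν r x) := by
  have h := (kernel_integrable hfc hfi hf0 hfd μ ν hr).integral_prod_left
  apply h.congr
  exact Eventually.of_forall fun x =>
    (AA_eq_prod_integral hfc hfi hf0 hfd μ ν (r := r) x).symm

lemma kernel_swap {r : ℝ} (hr : 0 < r) :
    ∫ x, AA f μ r x * AA f ν r x
      = ∫ z : ℝ × ℝ, r * GG f (r⁻¹ * (z.2 - z.1)) ∂(μ.prod ν) := by
  have hswap := integral_integral_swap (f := fun (x : ℝ) (z : ℝ × ℝ) =>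
      FF f (r⁻¹ * (x - z.1)) * FF f (r⁻¹ * (x - z.2)))
    (kernel_integrable hfc hfi hf0 hfd μ ν hr)
  have h2 : ∀ z : ℝ × ℝ, (∫ x, FF f (r⁻¹ * (x - z.1)) * FF f (r⁻¹ * (x - z.2)))
      = r * GG f (r⁻¹ * (z.2 - z.1)) := by
    intro z
    have key : ∀ x : ℝ, FF f (r⁻¹ * (x - z.1)) * FF f (r⁻¹ * (x - z.2))
        = (fun y : ℝ => FF f (r⁻¹ * y) * FF f (r⁻¹ * y - r⁻¹ * (z.2 - z.1))) (x - z.1) := by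
      intro x
      simp only
      congr 2
      ring
    rw [integral_congr_ae (Eventually.of_forall key),
      integral_sub_right_eq_self
        (fun y : ℝ => FF f (r⁻¹ * y) * FF f (r⁻¹ * y - r⁻¹ * (z.2 - z.1))) z.1]
    have key2 : ∀ y : ℝ, FF f (r⁻¹ * y) * FF f (r⁻¹ * y - r⁻¹ * (z.2 - z.1))
        = (fun w : ℝ => FF f w * FF f (w - r⁻¹ * (z.2 - z.1))) (r⁻¹ * y) := fun y => rfl
    rw [integral_congr_ae (Eventually.of_forall key2),
      Measure.integral_comp_inv_mul_left
        (fun w : ℝ => FF f w * FF f (w - r⁻¹ * (z.2 - z.1))) r,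
      abs_of_pos hr, smul_eq_mul, GG]
  calc ∫ x, AA f μ r x * AA f ν r x
      = ∫ x, ∫ z : ℝ × ℝ, FF f (r⁻¹ * (x - z.1)) * FF f (r⁻¹ * (x - z.2)) ∂(μ.prod ν) :=
        integral_congr_ae (Eventually.of_forall fun x =>
          AA_eq_prod_integral hfc hfi hf0 hfd μ ν (r := r) x)
    _ = ∫ z : ℝ × ℝ, (∫ x, FF f (r⁻¹ * (x - z.1)) * FF f (r⁻¹ * (x - z.2))) ∂(μ.prod ν) := hswap
    _ = ∫ z : ℝ × ℝ, r * GG f (r⁻¹ * (z.2 - z.1)) ∂(μ.prod ν) :=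
        integral_congr_ae (Eventually.of_forall fun z => h2 z)

lemma kernel_tendsto :
    Tendsto (fun r : ℝ => ∫ z : ℝ × ℝ, GG f (r⁻¹ * (z.2 - z.1)) ∂(μ.prod ν))
      (𝓝[>] (0:ℝ))
      (𝓝 (CF f * ((μ.prod ν) {z : ℝ × ℝ | z.1 = z.2}).toReal)) := by
  have hdiag : MeasurableSet {z : ℝ × ℝ | z.1 = z.2} :=
    (isClosed_eq continuous_fst continuous_snd).measurableSet
  have hlim : CF f * ((μ.prod ν) {z : ℝ × ℝ | z.1 = z.2}).toReal
      = ∫ z : ℝ × ℝ, Set.indicator {z : ℝ × ℝ | z.1 = z.2} (fun _ => CF f) z ∂(μ.prod ν) := by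
    rw [integral_indicator_const (CF f) hdiag, smul_eq_mul, mul_comm, measureReal_def]
  rw [hlim]
  apply tendsto_integral_filter_of_dominated_convergence (bound := fun _ => CF f)
  · exact Eventually.of_forall fun r =>
      ((GG_continuous hfc hfi hf0 hfd).comp
        (continuous_const.mul (continuous_snd.sub continuous_fst))).aestronglyMeasurable
  · exact Eventually.of_forall fun r => Eventually.of_forall fun z => by
      rw [Real.norm_eq_abs]; exact abs_GG_le hfc hfi hf0 hfd _
  · exact integrable_const _
  · refine Eventually.of_forall fun z => ?_
    by_cases hz : z.1 = z.2
    · have heq : ∀ r : ℝ, GG f (r⁻¹ * (z.2 - z.1)) = CF f := by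
        intro r; rw [show z.2 - z.1 = 0 by rw [hz]; ring, mul_zero, GG_zero]
      rw [Set.indicator_of_mem (show z ∈ {z : ℝ × ℝ | z.1 = z.2} from hz)]
      simpa [funext heq] using tendsto_const_nhds (x := CF f) (f := 𝓝[>] (0:ℝ))
    · rw [Set.indicator_of_notMem (show z ∉ {z : ℝ × ℝ | z.1 = z.2} from hz)]
      have hne : z.2 - z.1 ≠ 0 := fun h => hz (show z.1 = z.2 from (sub_eq_zero.1 h).symm)
      rcases hne.lt_or_gt with h | h
      · have h1 : Tendsto (fun r : ℝ => r⁻¹ * (z.2 - z.1)) (𝓝[>] (0:ℝ)) atBot := by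
          have := tendsto_inv_nhdsGT_zero.atTop_mul_const_of_neg (r := z.2 - z.1) h
          simpa [mul_comm] using this
        exact (GG_tendsto_atBot hfc hfi hf0 hfd).comp h1
      · have h1 : Tendsto (fun r : ℝ => r⁻¹ * (z.2 - z.1)) (𝓝[>] (0:ℝ)) atTop := by
          have := tendsto_inv_nhdsGT_zero.atTop_mul_const (r := z.2 - z.1) h
          simpa [mul_comm] using this
        exact (GG_tendsto_atTop hfc hfi hf0 hfd).comp h1

end Kernel

lemma leftLim_rightLim {g : ℝ → ℝ} (hg : Monotone g) (x : ℝ) :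
    Function.leftLim (Function.rightLim g) x = Function.leftLim g x := by
  apply leftLim_eq_of_tendsto
  refine tendsto_of_tendsto_of_tendsto_of_le_of_le' (hg.tendsto_leftLim x) tendsto_const_nhds
    ?_ ?_
  · exact Eventually.of_forall fun y => hg.le_rightLim le_rfl
  · filter_upwards [self_mem_nhdsWithin] with y hy
    exact hg.rightLim_le_leftLim hy

lemma prod_diag_eq (μ ν : Measure ℝ) [IsFiniteMeasure μ] [IsFiniteMeasure ν]
    {S : Set ℝ} (hSc : S.Countable) (hν : ∀ x ∉ S, ν {x} = 0) :
    (μ.prod ν) {z : ℝ × ℝ | z.1 = z.2} = ∑' x : S, ν {(x : ℝ)} * μ {(x : ℝ)} := by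
  have hdiag : MeasurableSet {z : ℝ × ℝ | z.1 = z.2} :=
    (isClosed_eq continuous_fst continuous_snd).measurableSet
  have h1 : (μ.prod ν) {z : ℝ × ℝ | z.1 = z.2} = ∫⁻ t, ν {t} ∂μ := by
    rw [Measure.prod_apply hdiag]
    apply lintegral_congr
    intro t
    congr 1
    ext s
    simp [eq_comm]
  have h2 : ∫⁻ t, ν {t} ∂μ = ∫⁻ t in S, ν {t} ∂μ := by
    rw [← lintegral_indicator hSc.measurableSet]
    apply lintegral_congr
    intro t
    by_cases ht : t ∈ S
    · rw [Set.indicator_of_mem ht]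
    · rw [Set.indicator_of_notMem ht, hν t ht]
  rw [h1, h2, lintegral_countable _ hSc]

lemma diag_summable (μ ν : Measure ℝ) [IsFiniteMeasure μ] [IsFiniteMeasure ν]
    {S : Set ℝ} (hSc : S.Countable) (hν : ∀ x ∉ S, ν {x} = 0) :
    Summable (fun x : S => (μ {(x : ℝ)}).toReal * (ν {(x : ℝ)}).toReal) := by
  have h := ENNReal.summable_toReal (f := fun x : S => ν {(x : ℝ)} * μ {(x : ℝ)}) (by
    rw [← prod_diag_eq μ ν hSc hν]
    exact measure_ne_top _ _)
  apply h.congr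
  intro x
  rw [ENNReal.toReal_mul, mul_comm]

lemma prod_diag_toReal (μ ν : Measure ℝ) [IsFiniteMeasure μ] [IsFiniteMeasure ν]
    {S : Set ℝ} (hSc : S.Countable) (hν : ∀ x ∉ S, ν {x} = 0) :
    ((μ.prod ν) {z : ℝ × ℝ | z.1 = z.2}).toReal
      = ∑' x : S, (μ {(x : ℝ)}).toReal * (ν {(x : ℝ)}).toReal := by
  rw [prod_diag_eq μ ν hSc hν,
    ENNReal.tsum_toReal_eq (fun a => ENNReal.mul_ne_top (measure_ne_top _ _) (measure_ne_top _ _))]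
  apply tsum_congr
  intro x
  rw [ENNReal.toReal_mul, mul_comm]

lemma scale_continuous (hfc : Continuous f) (r : ℝ) : Continuous (scaleFn f r) := by
  have : Continuous fun x : ℝ => r⁻¹ * f (r⁻¹ * x) := by fun_prop
  exact (funext fun x => scaleFn_apply (f := f) r x) ▸ this

lemma integral_scale_mul_cdf (hfc : Continuous f) (hfi : Integrable f)
    {r : ℝ} (hr : 0 < r) (μ : Measure ℝ) [IsFiniteMeasure μ] (x : ℝ) :
    ∫ y, scaleFn f r y * (μ (Set.Iic (x - y))).toReal = AA f μ r x := by
  classical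
  set E : Set (ℝ × ℝ) := {w | w.2 ≤ x - w.1} with hE
  have hEm : MeasurableSet E :=
    (isClosed_le continuous_snd (continuous_const.sub continuous_fst)).measurableSet
  set e : ℝ → ℝ → ℝ := fun y t => scaleFn f r y * E.indicator (fun _ => (1:ℝ)) (y, t) with he
  have hem : Measurable (Function.uncurry e) := by
    apply Measurable.mul
    · exact ((scale_continuous hfc r).measurable).comp measurable_fst
    · exact (measurable_const.indicator hEm)
  -- step 1: pointwise identity in y
  have step1 : ∀ y, scaleFn f r y * (μ (Set.Iic (x - y))).toReal = ∫ t, e y t ∂μ := by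
    intro y
    have : (μ (Set.Iic (x - y))).toReal
        = ∫ t, (Set.Iic (x - y)).indicator (fun _ => (1:ℝ)) t ∂μ := by
      rw [integral_indicator_const (1:ℝ) measurableSet_Iic, smul_eq_mul, mul_one, measureReal_def]
    rw [this, ← integral_const_mul]
    apply integral_congr_ae
    refine Eventually.of_forall fun t => ?_
    have : (Set.Iic (x - y)).indicator (fun _ => (1:ℝ)) t
        = E.indicator (fun _ => (1:ℝ)) (y, t) := by
      by_cases ht : t ≤ x - y
      · rw [Set.indicator_of_mem (Set.mem_Iic.2 ht),
          Set.indicator_of_mem (show (y, t) ∈ E from ht)]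
      · rw [Set.indicator_of_notMem (by simpa using ht),
          Set.indicator_of_notMem (show (y, t) ∉ E from ht)]
    simp only
    rw [this]
  -- step 2: integrability on the product
  have hint : Integrable (Function.uncurry e) (volume.prod μ) := by
    refine (integrable_prod_iff' hem.aestronglyMeasurable).2 ⟨?_, ?_⟩
    · refine Eventually.of_forall fun t => ?_
      apply Integrable.mono' ((scale_integrable hfi hr.ne').abs)
      · exact (hem.comp (measurable_id.prodMk measurable_const)).aestronglyMeasurable
      · refine Eventually.of_forall fun y => ?_
        rw [Function.uncurry, he]
        simp only [Real.norm_eq_abs, abs_mul]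
        rcases Set.indicator_eq_zero_or_self E (fun _ => (1:ℝ)) (y, t) with h | h <;>
          rw [h] <;> simp [abs_nonneg]
    · apply Integrable.mono' (integrable_const (∫ y, |scaleFn f r y|))
      · exact (hem.stronglyMeasurable.norm.integral_prod_left').aestronglyMeasurable
      · refine Eventually.of_forall fun t => ?_
        have h1 : ∀ y, ‖Function.uncurry e (y, t)‖ ≤ |scaleFn f r y| := by
          intro y
          rw [Function.uncurry, he]
          simp only [Real.norm_eq_abs, abs_mul]
          rcases Set.indicator_eq_zero_or_self E (fun _ => (1:ℝ)) (y, t) with h | h <;>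
            rw [h] <;> simp [abs_nonneg]
        have h2 : 0 ≤ ∫ y, ‖Function.uncurry e (y, t)‖ :=
          integral_nonneg fun y => norm_nonneg _
        rw [Real.norm_eq_abs, abs_of_nonneg h2]
        exact integral_mono ((Integrable.mono' ((scale_integrable hfi hr.ne').abs)
          ((hem.comp (measurable_id.prodMk measurable_const)).aestronglyMeasurable)
          (Eventually.of_forall h1)).norm) (scale_integrable hfi hr.ne').abs h1
  -- step 3: swap and compute the inner integral
  rw [integral_congr_ae (Eventually.of_forall step1), integral_integral_swap hint]
  apply integral_congr_ae
  refine Eventually.of_forall fun t => ?_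
  show (∫ y, e y t) = FF f (r⁻¹ * (x - t))
  have : ∀ y, e y t = (Set.Iic (x - t)).indicator (scaleFn f r) y := by
    intro y
    simp only [he]
    by_cases hyt : y ≤ x - t
    · rw [Set.indicator_of_mem (show (y, t) ∈ E from by
        simp only [hE, Set.mem_setOf_eq]; linarith),
        Set.indicator_of_mem (Set.mem_Iic.2 hyt), mul_one]
    · rw [Set.indicator_of_notMem (show (y, t) ∉ E from by
        simp only [hE, Set.mem_setOf_eq]; intro h; exact hyt (by linarith)),
        Set.indicator_of_notMem (by simpa using hyt), mul_zero]
  rw [integral_congr_ae (Eventually.of_forall this), integral_indicator measurableSet_Iic,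
    setIntegral_scale_Iic hr (x - t)]


end BBM1D

open BBM1D in
/-- for `u ∈ BV(ℝ)` (with right limits `u⁺` and left limits `u⁻` everywhere),
`lim_{r→0⁺} (1/r)‖f_r ∗ u‖_{L²}² = c_f ∑_{x ∈ J_u} |u⁺(x) − u⁻(x)|²`, where
`J_u = {x | u⁺(x) ≠ u⁻(x)}` and `c_f` is the corresponding limit for the Heaviside function. -/
theorem one_dimensional_limit (f : ℝ → ℝ) (hfsm : ContDiff ℝ (⊤ : ℕ∞) f)
    (hfi : Integrable f) (hf0 : (∫ x, f x) = 0)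
    (hfd : Integrable fun x : ℝ => |x| * |f x|)
    (c : ℝ)
    -- `c = c_f` is the limit for the Heaviside function (asserted to exist)
    (hc : Filter.Tendsto
      (fun r : ℝ => r⁻¹ * ∫ x in Set.Ioo (-1 : ℝ) 1,
        (conv (scaleFn f r) (fun y => if 0 ≤ y then (1 : ℝ) else 0) x) ^ 2)
      (𝓝[>] (0 : ℝ)) (𝓝 c))
    (u : ℝ → ℝ) (hu : BoundedVariationOn u Set.univ)
    (up um : ℝ → ℝ)
    (hup : ∀ x : ℝ, Filter.Tendsto u (𝓝[>] x) (𝓝 (up x)))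
    (hum : ∀ x : ℝ, Filter.Tendsto u (𝓝[<] x) (𝓝 (um x))) :
    Filter.Tendsto (fun r : ℝ => r⁻¹ * ∫ y, (conv (scaleFn f r) u y) ^ 2)
      (𝓝[>] (0 : ℝ))
      (𝓝 (c * ∑' x : {x : ℝ | up x ≠ um x}, (up (x : ℝ) - um (x : ℝ)) ^ 2)) := by

  classical
  have hfc : Continuous f := hfsm.continuous
  -- ## identification of the constant c
  have hceq : c = CF f := by
    apply tendsto_nhds_unique (hc.congr' ?_) (tendsto_heaviside hfc hfi hf0 hfd)
    filter_upwards [self_mem_nhdsWithin] with r hr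
    have : ∀ x : ℝ, conv (scaleFn f r) (fun y => if 0 ≤ y then (1:ℝ) else 0) x
        = FF f (r⁻¹ * x) := fun x => conv_scale_heaviside hr x
    simp only [this]
  -- ## Jordan decomposition
  have hlbv := hu.locallyBoundedVariationOn
  set p₀ : ℝ → ℝ := variationOnFromTo u Set.univ 0 with hp₀def
  have hp₀mono : Monotone p₀ :=
    monotoneOn_univ.1 (variationOnFromTo.monotoneOn hlbv (Set.mem_univ 0))
  set q₀ : ℝ → ℝ := fun x => p₀ x - u x with hq₀def
  have hq₀mono : Monotone q₀ := by
    have h := monotoneOn_univ.1 (variationOnFromTo.sub_self_monotoneOn hlbv (Set.mem_univ 0))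
    exact fun a b hab => h hab
  have hu_eq : ∀ z, u z = p₀ z - q₀ z := fun z => by rw [hq₀def]; ring
  -- ## bounds
  set M : ℝ := (eVariationOn u Set.univ).toReal with hMdef
  have hp₀bdd : ∀ x, |p₀ x| ≤ M := by
    intro x
    rcases le_total 0 x with h | h
    · rw [hp₀def, variationOnFromTo.eq_of_le u Set.univ h,
        abs_of_nonneg ENNReal.toReal_nonneg]
      exact ENNReal.toReal_mono hu (eVariationOn.mono u Set.inter_subset_left)
    · rw [hp₀def, variationOnFromTo.eq_of_ge u Set.univ h, abs_neg,
        abs_of_nonneg ENNReal.toReal_nonneg]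
      exact ENNReal.toReal_mono hu (eVariationOn.mono u Set.inter_subset_left)
  have hubdd : ∀ x, |u x| ≤ |u 0| + M := by
    intro x
    have h1 : dist (u x) (u 0) ≤ M := by
      rw [dist_edist]
      exact ENNReal.toReal_mono hu (eVariationOn.edist_le u (Set.mem_univ x) (Set.mem_univ 0))
    calc |u x| = |u 0 + (u x - u 0)| := by ring_nf
      _ ≤ |u 0| + |u x - u 0| := abs_add_le _ _
      _ ≤ |u 0| + M := by
          have : |u x - u 0| = dist (u x) (u 0) := (Real.dist_eq _ _).symm
          linarith [this ▸ h1]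
  have hq₀bdd : ∀ x, |q₀ x| ≤ M + (|u 0| + M) := by
    intro x
    rw [hq₀def]
    calc |p₀ x - u x| ≤ |p₀ x| + |u x| := abs_sub _ _
      _ ≤ M + (|u 0| + M) := add_le_add (hp₀bdd x) (hubdd x)
  -- ## Stieltjes functions and measures
  set P : StieltjesFunction ℝ := hp₀mono.stieltjesFunction with hPdef
  set Q : StieltjesFunction ℝ := hq₀mono.stieltjesFunction with hQdef
  have hPfun : ⇑P = Function.rightLim p₀ := funext fun x => hp₀mono.stieltjesFunction_eq x
  have hQfun : ⇑Q = Function.rightLim q₀ := funext fun x => hq₀mono.stieltjesFunction_eq x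
  have hPbdd : ∀ x, |P x| ≤ M := by
    intro x
    rw [hPfun]
    rcases abs_le.1 (hp₀bdd x) with ⟨h1, _⟩
    rcases abs_le.1 (hp₀bdd (x + 1)) with ⟨_, h2⟩
    have hle : p₀ x ≤ Function.rightLim p₀ x := hp₀mono.le_rightLim le_rfl
    have hge : Function.rightLim p₀ x ≤ p₀ (x + 1) := hp₀mono.rightLim_le (lt_add_one x)
    rw [abs_le]; constructor <;> linarith
  have hQbdd : ∀ x, |Q x| ≤ M + (|u 0| + M) := by
    intro x
    rw [hQfun]
    rcases abs_le.1 (hq₀bdd x) with ⟨h1, _⟩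
    rcases abs_le.1 (hq₀bdd (x + 1)) with ⟨_, h2⟩
    have hle : q₀ x ≤ Function.rightLim q₀ x := hq₀mono.le_rightLim le_rfl
    have hge : Function.rightLim q₀ x ≤ q₀ (x + 1) := hq₀mono.rightLim_le (lt_add_one x)
    rw [abs_le]; constructor <;> linarith
  have hPbb : BddBelow (Set.range ⇑P) := ⟨-M, by
    rintro _ ⟨x, rfl⟩; linarith [(abs_le.1 (hPbdd x)).1]⟩
  have hPba : BddAbove (Set.range ⇑P) := ⟨M, by
    rintro _ ⟨x, rfl⟩; linarith [(abs_le.1 (hPbdd x)).2]⟩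
  have hQbb : BddBelow (Set.range ⇑Q) := ⟨-(M + (|u 0| + M)), by
    rintro _ ⟨x, rfl⟩; linarith [(abs_le.1 (hQbdd x)).1]⟩
  have hQba : BddAbove (Set.range ⇑Q) := ⟨M + (|u 0| + M), by
    rintro _ ⟨x, rfl⟩; linarith [(abs_le.1 (hQbdd x)).2]⟩
  set lP : ℝ := ⨅ x, P x with hlPdef
  set lQ : ℝ := ⨅ x, Q x with hlQdef
  have hPbot : Tendsto ⇑P atBot (𝓝 lP) := tendsto_atBot_ciInf P.mono hPbb
  have hQbot : Tendsto ⇑Q atBot (𝓝 lQ) := tendsto_atBot_ciInf Q.mono hQbb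
  have hPtop : Tendsto ⇑P atTop (𝓝 (⨆ x, P x)) := tendsto_atTop_ciSup P.mono hPba
  have hQtop : Tendsto ⇑Q atTop (𝓝 (⨆ x, Q x)) := tendsto_atTop_ciSup Q.mono hQba
  have hPfin : IsFiniteMeasure P.measure := ⟨by
    rw [P.measure_univ hPbot hPtop]; exact ENNReal.ofReal_lt_top⟩
  have hQfin : IsFiniteMeasure Q.measure := ⟨by
    rw [Q.measure_univ hQbot hQtop]; exact ENNReal.ofReal_lt_top⟩
  have hPIic : ∀ z, (P.measure (Set.Iic z)).toReal = P z - lP := by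
    intro z
    rw [P.measure_Iic hPbot z, ENNReal.toReal_ofReal (sub_nonneg.2 (ciInf_le hPbb z))]
  have hQIic : ∀ z, (Q.measure (Set.Iic z)).toReal = Q z - lQ := by
    intro z
    rw [Q.measure_Iic hQbot z, ENNReal.toReal_ofReal (sub_nonneg.2 (ciInf_le hQbb z))]
  -- ## the countable exceptional set
  set N : Set ℝ := {x | ¬ContinuousAt p₀ x} ∪ {x | ¬ContinuousAt q₀ x} with hNdef
  have hNc : N.Countable :=
    (hp₀mono.countable_not_continuousAt).union (hq₀mono.countable_not_continuousAt)
  have hPval : ∀ x ∉ N, P x = p₀ x ∧ Q x = q₀ x := by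
    intro x hx
    have hxp : ContinuousAt p₀ x := by
      by_contra h; exact hx (Or.inl h)
    have hxq : ContinuousAt q₀ x := by
      by_contra h; exact hx (Or.inr h)
    constructor
    · rw [hPfun]
      exact (hp₀mono.continuousWithinAt_Ioi_iff_rightLim_eq).1 hxp.continuousWithinAt
    · rw [hQfun]
      exact (hq₀mono.continuousWithinAt_Ioi_iff_rightLim_eq).1 hxq.continuousWithinAt
  -- jump identities
  have hup_eq : ∀ x, up x = P x - Q x := by
    intro x
    have h1 : Tendsto u (𝓝[>] x) (𝓝 (Function.rightLim p₀ x - Function.rightLim q₀ x)) := by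
      have := (hp₀mono.tendsto_rightLim x).sub (hq₀mono.tendsto_rightLim x)
      apply this.congr
      intro y; exact (hu_eq y).symm
    have := tendsto_nhds_unique (hup x) h1
    rw [this, hPfun, hQfun]
  have hum_eq : ∀ x, um x = Function.leftLim p₀ x - Function.leftLim q₀ x := by
    intro x
    have h1 : Tendsto u (𝓝[<] x) (𝓝 (Function.leftLim p₀ x - Function.leftLim q₀ x)) := by
      have := (hp₀mono.tendsto_leftLim x).sub (hq₀mono.tendsto_leftLim x)
      apply this.congr
      intro y; exact (hu_eq y).symm
    exact tendsto_nhds_unique (hum x) h1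
  have hPleft : ∀ x, Function.leftLim ⇑P x = Function.leftLim p₀ x := by
    intro x; rw [hPfun, leftLim_rightLim hp₀mono]
  have hQleft : ∀ x, Function.leftLim ⇑Q x = Function.leftLim q₀ x := by
    intro x; rw [hQfun, leftLim_rightLim hq₀mono]
  -- atoms
  have haP : ∀ x, (P.measure {x}).toReal = P x - Function.leftLim ⇑P x := by
    intro x
    rw [P.measure_singleton, ENNReal.toReal_ofReal (sub_nonneg.2 (P.mono.leftLim_le le_rfl))]
  have haQ : ∀ x, (Q.measure {x}).toReal = Q x - Function.leftLim ⇑Q x := by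
    intro x
    rw [Q.measure_singleton, ENNReal.toReal_ofReal (sub_nonneg.2 (Q.mono.leftLim_le le_rfl))]
  have hjump : ∀ x, up x - um x = (P.measure {x}).toReal - (Q.measure {x}).toReal := by
    intro x
    rw [hup_eq x, hum_eq x, haP x, haQ x, hPleft x, hQleft x]
    ring
  have hPatom : ∀ x ∉ N, P.measure {x} = 0 := by
    intro x hx
    have hxp : ContinuousAt p₀ x := by by_contra h; exact hx (Or.inl h)
    have h1 : Function.leftLim p₀ x = Function.rightLim p₀ x :=
      (hp₀mono.continuousAt_iff_leftLim_eq_rightLim).1 hxp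
    rw [P.measure_singleton, hPleft x, h1, ← hPfun]
    simp
  have hQatom : ∀ x ∉ N, Q.measure {x} = 0 := by
    intro x hx
    have hxq : ContinuousAt q₀ x := by by_contra h; exact hx (Or.inr h)
    have h1 : Function.leftLim q₀ x = Function.rightLim q₀ x :=
      (hq₀mono.continuousAt_iff_leftLim_eq_rightLim).1 hxq
    rw [Q.measure_singleton, hQleft x, h1, ← hQfun]
    simp
  haveI := hPfin
  haveI := hQfin
  -- ## conv identity
  have hconv : ∀ {r : ℝ}, 0 < r → ∀ x, conv (scaleFn f r) u x
      = AA f P.measure r x - AA f Q.measure r x := by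
    intro r hr x
    rw [conv_def]
    have hBc : ((fun z : ℝ => x - z) '' N).Countable := hNc.image _
    have hae0 : ∀ᵐ y : ℝ, y ∉ ((fun z : ℝ => x - z) '' N) :=
      measure_eq_zero_iff_ae_notMem.mp (hBc.measure_zero volume)
    have hae2 : ∀ᵐ y : ℝ, scaleFn f r y * u (x - y)
        = scaleFn f r y * (P.measure (Set.Iic (x - y))).toReal
          - scaleFn f r y * (Q.measure (Set.Iic (x - y))).toReal
          + scaleFn f r y * (lP - lQ) := by
      filter_upwards [hae0] with y hy
      have hxy : x - y ∉ N := fun h => hy ⟨x - y, h, by ring⟩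
      obtain ⟨hP1, hQ1⟩ := hPval (x - y) hxy
      have hval : u (x - y) = (P.measure (Set.Iic (x - y))).toReal
          - (Q.measure (Set.Iic (x - y))).toReal + (lP - lQ) := by
        rw [hPIic, hQIic, hu_eq (x - y), ← hP1, ← hQ1]; ring
      rw [hval]; ring
    rw [integral_congr_ae hae2]
    have hPm : Measurable fun z : ℝ => P.measure (Set.Iic z) :=
      Monotone.measurable fun a b hab => measure_mono (Set.Iic_subset_Iic.2 hab)
    have hQm : Measurable fun z : ℝ => Q.measure (Set.Iic z) :=
      Monotone.measurable fun a b hab => measure_mono (Set.Iic_subset_Iic.2 hab)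
    have hPaesm : AEStronglyMeasurable
        (fun y : ℝ => (P.measure (Set.Iic (x - y))).toReal) volume :=
      ((ENNReal.measurable_toReal.comp hPm).comp
        (measurable_const.sub measurable_id)).aestronglyMeasurable
    have hQaesm : AEStronglyMeasurable
        (fun y : ℝ => (Q.measure (Set.Iic (x - y))).toReal) volume :=
      ((ENNReal.measurable_toReal.comp hQm).comp
        (measurable_const.sub measurable_id)).aestronglyMeasurable
    have J1 : Integrable (fun y => scaleFn f r y * (P.measure (Set.Iic (x - y))).toReal) := by
      have := Integrable.bdd_mul (c := (P.measure Set.univ).toReal) (scale_integrable hfi hr.ne') hPaesm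
        (Eventually.of_forall fun y => by
          rw [Real.norm_eq_abs, abs_of_nonneg ENNReal.toReal_nonneg]
          exact ENNReal.toReal_mono (measure_ne_top _ _) (measure_mono (Set.subset_univ _)))
      exact this.congr (Eventually.of_forall fun y => mul_comm _ _)
    have J2 : Integrable (fun y => scaleFn f r y * (Q.measure (Set.Iic (x - y))).toReal) := by
      have := Integrable.bdd_mul (c := (Q.measure Set.univ).toReal) (scale_integrable hfi hr.ne') hQaesm
        (Eventually.of_forall fun y => by
          rw [Real.norm_eq_abs, abs_of_nonneg ENNReal.toReal_nonneg]
          exact ENNReal.toReal_mono (measure_ne_top _ _) (measure_mono (Set.subset_univ _)))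
      exact this.congr (Eventually.of_forall fun y => mul_comm _ _)
    have J3 : Integrable (fun y => scaleFn f r y * (lP - lQ)) :=
      (scale_integrable hfi hr.ne').mul_const _
    have J12 : Integrable (fun y => scaleFn f r y * (P.measure (Set.Iic (x - y))).toReal
        - scaleFn f r y * (Q.measure (Set.Iic (x - y))).toReal) := J1.sub J2
    rw [integral_add J12 J3, integral_sub J1 J2,
      integral_scale_mul_cdf hfc hfi hr P.measure x,
      integral_scale_mul_cdf hfc hfi hr Q.measure x]
    have hz : ∫ y, scaleFn f r y * (lP - lQ) = 0 := by
      rw [integral_mul_const, integral_scale hf0, zero_mul]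
    rw [hz, add_zero]
  -- ## expansion of the squared L² norm
  have hexp : ∀ {r : ℝ}, 0 < r →
      r⁻¹ * ∫ y, (conv (scaleFn f r) u y) ^ 2
        = (∫ z : ℝ × ℝ, GG f (r⁻¹ * (z.2 - z.1)) ∂(P.measure.prod P.measure))
          - (∫ z : ℝ × ℝ, GG f (r⁻¹ * (z.2 - z.1)) ∂(P.measure.prod Q.measure))
          - (∫ z : ℝ × ℝ, GG f (r⁻¹ * (z.2 - z.1)) ∂(Q.measure.prod P.measure))
          + (∫ z : ℝ × ℝ, GG f (r⁻¹ * (z.2 - z.1)) ∂(Q.measure.prod Q.measure)) := by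
    intro r hr
    have h1 : ∀ y, (conv (scaleFn f r) u y) ^ 2
        = AA f P.measure r y * AA f P.measure r y
          - AA f P.measure r y * AA f Q.measure r y
          - AA f Q.measure r y * AA f P.measure r y
          + AA f Q.measure r y * AA f Q.measure r y := by
      intro y; rw [hconv hr y]; ring
    rw [integral_congr_ae (Eventually.of_forall h1)]
    have I1 := AA_mul_integrable hfc hfi hf0 hfd P.measure P.measure hr
    have I2 := AA_mul_integrable hfc hfi hf0 hfd P.measure Q.measure hr
    have I3 := AA_mul_integrable hfc hfi hf0 hfd Q.measure P.measure hr
    have I4 := AA_mul_integrable hfc hfi hf0 hfd Q.measure Q.measure hr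
    have I12 : Integrable (fun y => AA f P.measure r y * AA f P.measure r y
        - AA f P.measure r y * AA f Q.measure r y) := I1.sub I2
    have I123 : Integrable (fun y => AA f P.measure r y * AA f P.measure r y
        - AA f P.measure r y * AA f Q.measure r y
        - AA f Q.measure r y * AA f P.measure r y) := I12.sub I3
    rw [integral_add I123 I4, integral_sub I12 I3, integral_sub I1 I2,
      kernel_swap hfc hfi hf0 hfd P.measure P.measure hr,
      kernel_swap hfc hfi hf0 hfd P.measure Q.measure hr,
      kernel_swap hfc hfi hf0 hfd Q.measure P.measure hr,
      kernel_swap hfc hfi hf0 hfd Q.measure Q.measure hr,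
      integral_const_mul, integral_const_mul, integral_const_mul, integral_const_mul]
    field_simp
  -- ## the final limit
  have hlim := (((kernel_tendsto hfc hfi hf0 hfd P.measure P.measure).sub
      (kernel_tendsto hfc hfi hf0 hfd P.measure Q.measure)).sub
      (kernel_tendsto hfc hfi hf0 hfd Q.measure P.measure)).add
      (kernel_tendsto hfc hfi hf0 hfd Q.measure Q.measure)
  -- ## identify the limit value
  have Dpp := prod_diag_toReal P.measure P.measure hNc hPatom
  have Dpq := prod_diag_toReal P.measure Q.measure hNc hQatom
  have Dqp := prod_diag_toReal Q.measure P.measure hNc hPatom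
  have Dqq := prod_diag_toReal Q.measure Q.measure hNc hQatom
  have Spp := diag_summable P.measure P.measure hNc hPatom
  have Spq := diag_summable P.measure Q.measure hNc hQatom
  have Sqp := diag_summable Q.measure P.measure hNc hPatom
  have Sqq := diag_summable Q.measure Q.measure hNc hQatom
  set g : ℝ → ℝ := fun x => (up x - um x) ^ 2 with hgdef
  have hsum : ∑' x : N, g (x : ℝ)
      = (∑' x : N, (P.measure {(x:ℝ)}).toReal * (P.measure {(x:ℝ)}).toReal)
        - (∑' x : N, (P.measure {(x:ℝ)}).toReal * (Q.measure {(x:ℝ)}).toReal)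
        - (∑' x : N, (Q.measure {(x:ℝ)}).toReal * (P.measure {(x:ℝ)}).toReal)
        + (∑' x : N, (Q.measure {(x:ℝ)}).toReal * (Q.measure {(x:ℝ)}).toReal) := by
    rw [← Summable.tsum_sub Spp Spq, ← Summable.tsum_sub (Spp.sub Spq) Sqp, ← Summable.tsum_add ((Spp.sub Spq).sub Sqp) Sqq]
    apply tsum_congr
    intro x
    have hg : g (x : ℝ) = (up (x : ℝ) - um (x : ℝ)) ^ 2 := rfl
    rw [hg, hjump (x : ℝ)]
    ring
  have hsupN : Function.support g ⊆ N := by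
    intro x hx
    by_contra hxN
    apply hx
    have hg : g x = (up x - um x) ^ 2 := rfl
    rw [hg, hjump x, hPatom x hxN, hQatom x hxN]
    simp
  have hsupJ : Function.support g ⊆ {x : ℝ | up x ≠ um x} := by
    intro x hx
    simp only [Set.mem_setOf_eq]
    intro h
    apply hx
    have hg : g x = (up x - um x) ^ 2 := rfl
    rw [hg, h]
    simp
  have hJN : ∑' x : {x : ℝ | up x ≠ um x}, g (x : ℝ) = ∑' x : N, g (x : ℝ) := by
    rw [tsum_subtype_eq_of_support_subset hsupJ, tsum_subtype_eq_of_support_subset hsupN]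
  have hvalue : CF f * ((P.measure.prod P.measure) {z : ℝ × ℝ | z.1 = z.2}).toReal
      - CF f * ((P.measure.prod Q.measure) {z : ℝ × ℝ | z.1 = z.2}).toReal
      - CF f * ((Q.measure.prod P.measure) {z : ℝ × ℝ | z.1 = z.2}).toReal
      + CF f * ((Q.measure.prod Q.measure) {z : ℝ × ℝ | z.1 = z.2}).toReal
      = c * ∑' x : {x : ℝ | up x ≠ um x}, (up (x : ℝ) - um (x : ℝ)) ^ 2 := by
    have : (∑' x : {x : ℝ | up x ≠ um x}, (up (x : ℝ) - um (x : ℝ)) ^ 2)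
        = ∑' x : {x : ℝ | up x ≠ um x}, g (x : ℝ) := rfl
    rw [this, hJN, hsum, Dpp, Dpq, Dqp, Dqq, hceq]
    ring
  rw [← hvalue]
  apply hlim.congr'
  filter_upwards [self_mem_nhdsWithin] with r hr
  exact (hexp hr).symm
end
end
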